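/- arXiv:2004.05321 — 6 statements merged into one kernel-verified Lean document; each statement's English description precedes it below -/
import Mathlib

section
/- Let X be a topological space and let 𝓘 be an ideal of compact sets in X. Let Y = ⨁_{n∈ω} X_n be the direct topological sum of countably many copies X_n = X of X, and let 𝓘(Y) be the family of all compact subsets F of Y such that F ∩ X_n ∈ 𝓘 for every n ∈ ω (so 𝓘(Y) is an ideal of compact sets in Y). Then X has property γ_𝓘 if and only if Y has property γ_{𝓘(Y)}. -/
open Set Filter Topology TopologicalSpace

universe u v

/-- An ideal of compact sets in a topological space `X`. -/
structure IsCompactIdeal (X : Type u) [TopologicalSpace X] (I : Set (Set X)) : Prop where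
  isCompact : ∀ A ∈ I, IsCompact A
  sUnion_eq : ⋃₀ I = Set.univ
  union_mem : ∀ A ∈ I, ∀ B ∈ I, A ∪ B ∈ I
  inter_compact_mem : ∀ A ∈ I, ∀ K : Set X, IsCompact K → A ∩ K ∈ I

/-- `γ` is an `I`-cover of `X`. -/
def IsIdealCover {X : Type u} (I : Set (Set X)) (γ : Set (Set X)) : Prop :=
  ∀ A ∈ I, ∃ U ∈ γ, A ⊆ U

/-- `C` is an `I`-sequence in `X`. -/
def IsIdealSeq {X : Type u} (I : Set (Set X)) (C : ℕ → Set X) : Prop :=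
  ∀ A ∈ I, ∃ m : ℕ, ∀ n ≥ m, A ⊆ C n

/-- The property `γ_I`: every open `I`-cover contains an `I`-sequence. -/
def GammaIdeal (X : Type u) [TopologicalSpace X] (I : Set (Set X)) : Prop :=
  ∀ γ : Set (Set X), (∀ U ∈ γ, IsOpen U) → IsIdealCover I γ →
    ∃ C : ℕ → Set X, (∀ n, C n ∈ γ) ∧ IsIdealSeq I C

/-- `γ` is an ω-cover of `X`: every finite set is contained in a member. -/
def IsOmegaCover {X : Type u} (γ : Set (Set X)) : Prop :=
  ∀ F : Set X, F.Finite → ∃ U ∈ γ, F ⊆ U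

/-- The property `γ`: every open ω-cover contains a sequence in which every point
eventually lies. -/
def GammaP (X : Type u) [TopologicalSpace X] : Prop :=
  ∀ γ : Set (Set X), (∀ U ∈ γ, IsOpen U) → IsOmegaCover γ →
    ∃ C : ℕ → Set X, (∀ n, C n ∈ γ) ∧ ∀ x : X, ∃ m : ℕ, ∀ n ≥ m, x ∈ C n

/-- The property `φ`. -/
def PhiP (X : Type u) [TopologicalSpace X] : Prop :=
  ∀ η : ℕ → Set (Set X),
    (∀ n, ∀ U ∈ η n, IsOpen U) →
    (∀ n, ∀ U ∈ η n, ∃ V ∈ η (n + 1), U ⊆ V) →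
    IsOmegaCover (⋃ n, η n) →
    ∃ C : ℕ → Set X, (∀ x : X, ∃ m : ℕ, ∀ n ≥ m, x ∈ C n) ∧
      ∀ n, ∀ F : Set X, F.Finite → F ⊆ C n → ∃ U ∈ η n, F ⊆ U

/-- The property `φ_I`. -/
def PhiIdeal (X : Type u) [TopologicalSpace X] (I : Set (Set X)) : Prop :=
  ∀ η : ℕ → Set (Set X),
    (∀ n, ∀ U ∈ η n, IsOpen U) →
    (∀ n, ∀ U ∈ η n, ∃ V ∈ η (n + 1), U ⊆ V) →
    IsIdealCover I (⋃ n, η n) →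
    ∃ C : ℕ → Set X, IsIdealSeq I C ∧
      ∀ n, ∀ A ∈ I, A ⊆ C n → ∃ U ∈ η n, A ⊆ U

/-- The `I`-open topology on `Y^X`, generated by the sets `[K;U] = {f | f(K) ⊆ U}`
for `K ∈ I` and `U ⊆ Y` open. -/
def idealOpenTopology {X : Type u} [TopologicalSpace X] (I : Set (Set X))
    (Y : Type v) [TopologicalSpace Y] : TopologicalSpace (X → Y) :=
  TopologicalSpace.generateFrom
    {S : Set (X → Y) | ∃ K ∈ I, ∃ U : Set Y, IsOpen U ∧ S = {f : X → Y | Set.MapsTo f K U}}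

/-- Type synonym for `X → Y` carrying the `I`-open topology. -/
def IdealFn (X : Type u) (Y : Type v) [TopologicalSpace X] [TopologicalSpace Y]
    (I : Set (Set X)) : Type (max u v) := X → Y

instance IdealFn.instTopologicalSpace {X : Type u} {Y : Type v} [TopologicalSpace X]
    [TopologicalSpace Y] (I : Set (Set X)) : TopologicalSpace (IdealFn X Y I) :=
  idealOpenTopology I Y

/-- `X` is `Y_I`-Tychonoff. -/
def IdealYTychonoff (X : Type u) (Y : Type v) [TopologicalSpace X] [TopologicalSpace Y]
    (I : Set (Set X)) : Prop :=
  ∀ A : Set X, IsClosed A → ∀ y₀ : Y, ∀ F ∈ I, F ⊆ Aᶜ →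
    ∀ f : F → Y, Continuous f → (Set.range f).Finite →
      ∃ g : X → Y, Continuous g ∧ (∀ x : F, g x.1 = f x) ∧ g '' A ⊆ {y₀}

/-- `X` is `Y`-Tychonoff (the case of the ideal of finite sets, with arbitrary
functions on finite sets). -/
def YTychonoff (X : Type u) (Y : Type v) [TopologicalSpace X] [TopologicalSpace Y] : Prop :=
  ∀ A : Set X, IsClosed A → ∀ y₀ : Y, ∀ F : Set X, F.Finite → F ⊆ Aᶜ →
    ∀ f : F → Y, ∃ g : X → Y, Continuous g ∧ (∀ x : F, g x.1 = f x) ∧ g '' A ⊆ {y₀}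

/-- `H` is a relatively `D_I`-Tychonoff subspace of `S ⊆ Y^X`. -/
def RelTychonoffSub {X : Type u} {Y : Type v} [TopologicalSpace X]
    (I : Set (Set X)) (D : Set Y) (H S : Set (X → Y)) : Prop :=
  ∀ A : Set X, IsClosed A → ∀ F ∈ I, F ⊆ Aᶜ → ∀ y₀ ∈ D, ∀ f ∈ S,
    (f '' F).Finite → f '' F ⊆ D →
      ∃ g ∈ H, Set.EqOn g f F ∧ g '' A ⊆ {y₀}

/-- `Z` is a k-space: for every non-closed `A ⊆ Z` there is a compact `K` such that
`A ∩ K` is not closed in `K`. -/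
def IsKSpace (Z : Type u) [TopologicalSpace Z] : Prop :=
  ∀ A : Set Z, ¬ IsClosed A → ∃ K : Set Z, IsCompact K ∧
    ¬ IsClosed (Subtype.val ⁻¹' A : Set K)

/-- `Z` has countable tightness. -/
def HasCountableTightness (Z : Type u) [TopologicalSpace Z] : Prop :=
  ∀ (A : Set Z) (z : Z), z ∈ closure A → ∃ B ⊆ A, B.Countable ∧ z ∈ closure B

/-- `⋃_n ⋂_{i ≥ n} U i`, the set of points eventually in all `U i`. -/
def seqLimInf {X : Type u} (U : ℕ → Set X) : Set X :=
  ⋃ n, ⋂ i, ⋂ (_ : n ≤ i), U i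

/-- A zero-set in `X`. -/
def IsZeroSet {X : Type u} [TopologicalSpace X] (F : Set X) : Prop :=
  ∃ f : X → ℝ, Continuous f ∧ F = f ⁻¹' {0}

/-- The Baire topology on `X`, with the zero-sets as a base. -/
def baireTopology (X : Type u) [TopologicalSpace X] : TopologicalSpace X :=
  TopologicalSpace.generateFrom {F : Set X | IsZeroSet F}

/-- `X` is `Y`-z-Tychonoff. -/
def YzTychonoff (X : Type u) (Y : Type v) [TopologicalSpace X] [TopologicalSpace Y] : Prop :=
  (T1Space X ∧ CompletelyRegularSpace X) ∧
  ∀ A : Set X, IsClosed A → ∀ n : ℕ, ∀ F : Fin n → Set X,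
    (∀ i, IsZeroSet (F i)) → (∀ i j, i ≠ j → Disjoint (F i) (F j)) →
    (⋃ i, F i) ⊆ Aᶜ → ∀ y₀ : Y, ∀ y : Fin n → Y,
      ∃ f : X → Y, Continuous f ∧ f '' A ⊆ {y₀} ∧ ∀ i, f '' (F i) ⊆ {y i}

/-- `X` is `Y`-normal. -/
def YNormal (X : Type u) (Y : Type v) [TopologicalSpace X] [TopologicalSpace Y] : Prop :=
  T1Space X ∧
  ∀ F : Set X, IsClosed F → ∀ f : F → Y, Continuous f → (Set.range f).Finite →
    ∃ g : X → Y, Continuous g ∧ ∀ x : F, g x.1 = f x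

/-- `X` is `Y`-z-normal. -/
def YzNormal (X : Type u) (Y : Type v) [TopologicalSpace X] [TopologicalSpace Y] : Prop :=
  (T1Space X ∧ CompletelyRegularSpace X) ∧
  ∀ F : Set X, IsZeroSet F → ∀ f : F → Y, Continuous f → (Set.range f).Finite →
    ∃ g : X → Y, Continuous g ∧ ∀ x : F, g x.1 = f x

/-- `f n` stably converges to `g`. -/
def StablyConvergesTo {X : Type u} {Y : Type v} (f : ℕ → X → Y) (g : X → Y) : Prop :=
  ∀ x : X, {n : ℕ | f n x ≠ g x}.Finite

/-- The stable Baire class one functions `B₁ˢᵗ(X,Y)`. -/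
def BaireOneStable (X : Type u) (Y : Type v) [TopologicalSpace X] [TopologicalSpace Y] :
    Set (X → Y) :=
  {g | ∃ f : ℕ → X → Y, (∀ n, Continuous (f n)) ∧ StablyConvergesTo f g}

/-- The Baire class one functions `B₁(X,Y)`, pointwise limits of sequences of
continuous functions. -/
def BaireOne (X : Type u) (Y : Type v) [TopologicalSpace X] [TopologicalSpace Y] :
    Set (X → Y) :=
  {g | ∃ f : ℕ → X → Y, (∀ n, Continuous (f n)) ∧
    ∀ x : X, Filter.Tendsto (fun n => f n x) Filter.atTop (nhds (g x))}

/-- The Baire functions `B(X,Y) = ⋃_{α<ω₁} B_α(X,Y)`: the smallest family containing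
the continuous functions and closed under pointwise limits of sequences. -/
inductive IsBaireFun (X : Type u) (Y : Type v) [TopologicalSpace X] [TopologicalSpace Y] :
    (X → Y) → Prop
  | cont (f : X → Y) : Continuous f → IsBaireFun X Y f
  | limit (f : ℕ → X → Y) (g : X → Y) : (∀ n, IsBaireFun X Y (f n)) →
      (∀ x : X, Filter.Tendsto (fun n => f n x) Filter.atTop (nhds (g x))) →
      IsBaireFun X Y g

/-- `Z` is scattered: every nonempty subset has an isolated point. -/
def IsScatteredSpace (Z : Type u) [TopologicalSpace Z] : Prop :=
  ∀ S : Set Z, S.Nonempty → ∃ x ∈ S, ∃ U : Set Z, IsOpen U ∧ U ∩ S = {x}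

/-- The subspace `K` of `X` is scattered. -/
def IsScatteredSubset {X : Type u} [TopologicalSpace X] (K : Set X) : Prop :=
  ∀ S : Set X, S ⊆ K → S.Nonempty → ∃ x ∈ S, ∃ U : Set X, IsOpen U ∧ U ∩ S = {x}

/-- The tightness `t(Z)`: the least infinite cardinal `κ` such that whenever
`z ∈ closure A` there is `B ⊆ A` with `#B ≤ κ` and `z ∈ closure B`. -/
noncomputable def tightnessCard (Z : Type u) [TopologicalSpace Z] : Cardinal.{u} :=
  sInf {κ : Cardinal.{u} | Cardinal.aleph0 ≤ κ ∧ ∀ (A : Set Z) (z : Z), z ∈ closure A →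
    ∃ B : Set Z, B ⊆ A ∧ Cardinal.mk B ≤ κ ∧ z ∈ closure B}

/-- The `I`-Lindelöf degree of `X`: the least infinite cardinal `κ` such that every
open `I`-cover has an `I`-subcover of cardinality `≤ κ`. -/
noncomputable def idealLindelofDeg (X : Type u) [TopologicalSpace X] (I : Set (Set X)) :
    Cardinal.{u} :=
  sInf {κ : Cardinal.{u} | Cardinal.aleph0 ≤ κ ∧ ∀ γ : Set (Set X), (∀ U ∈ γ, IsOpen U) →
    IsIdealCover I γ → ∃ γ' : Set (Set X), γ' ⊆ γ ∧ Cardinal.mk γ' ≤ κ ∧ IsIdealCover I γ'}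

/-!
A compact subset of `Y = Σ n, X` meets only finitely many summands, so every member of
`I(Y)` lies in a box `{0, …, N} × A` with `A ∈ I`; conversely every such box belongs to `I(Y)`.
Pulling an open `I`-cover of `X` back along the projection `Y → X` therefore gives an open
`I(Y)`-cover of `Y`, and an `I(Y)`-sequence inside it projects to an `I`-sequence.

For the converse, an open `I(Y)`-cover `γ` of `Y` yields the decreasing sequence of open
`I`-covers `V k = {⋂_{n ≤ m} Wₙ | W ∈ γ, m ≥ k}` of `X`, where `Wₙ` is the `n`-th fiber of `W`.
A diagonal argument shows that in a `γ_I`-space one can choose `Sₖ ∈ V k` forming an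
`I`-sequence, and the members of `γ` behind the `Sₖ` form an `I(Y)`-sequence.
-/

section IdealSeq

variable {X : Type u} {I : Set (Set X)}

theorem isIdealSeq_iff {C : ℕ → Set X} :
    IsIdealSeq I C ↔ ∀ A ∈ I, ∀ᶠ n in atTop, A ⊆ C n := by
  simp only [IsIdealSeq, eventually_atTop]

theorem IsIdealSeq.mono {C D : ℕ → Set X} (hC : IsIdealSeq I C) (hCD : ∀ n, C n ⊆ D n) :
    IsIdealSeq I D :=
  isIdealSeq_iff.2 fun A hA => (isIdealSeq_iff.1 hC A hA).mono fun n hn => hn.trans (hCD n)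

theorem IsIdealSeq.comp_tendsto {C : ℕ → Set X} (hC : IsIdealSeq I C) {r : ℕ → ℕ}
    (hr : Tendsto r atTop atTop) : IsIdealSeq I (C ∘ r) :=
  isIdealSeq_iff.2 fun A hA => hr.eventually (isIdealSeq_iff.1 hC A hA)

theorem IsIdealSeq.exists_subseq_mem_of_antitone {C : ℕ → Set X} (hC : IsIdealSeq I C)
    {V : ℕ → Set (Set X)} (hV : Antitone V) {j : ℕ → ℕ} (hj : Tendsto j atTop atTop)
    (hCV : ∀ r, C r ∈ V (j r)) : ∃ S : ℕ → Set X, (∀ n, S n ∈ V n) ∧ IsIdealSeq I S := by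
  have hr : ∀ n, ∃ r, n ≤ r ∧ n ≤ j r := fun n =>
    ((eventually_ge_atTop n).and (tendsto_atTop.1 hj n)).exists
  choose r hr_ge hjr_ge using hr
  exact ⟨C ∘ r, fun n => hV (hjr_ge n) (hCV (r n)),
    hC.comp_tendsto (tendsto_atTop_mono hr_ge tendsto_id)⟩

end IdealSeq

theorem GammaIdeal.exists_isIdealSeq_of_antitone {X : Type u} [TopologicalSpace X]
    {I : Set (Set X)} (h : GammaIdeal X I) {V : ℕ → Set (Set X)} (hV : Antitone V)
    (hop : ∀ k, ∀ U ∈ V k, IsOpen U) (hcov : ∀ k, IsIdealCover I (V k)) :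
    ∃ S : ℕ → Set X, (∀ n, S n ∈ V n) ∧ IsIdealSeq I S := by
  by_cases htriv : ∀ k, ∃ U ∈ V k, ∀ A ∈ I, A ⊆ U
  · choose U hUV hU using htriv
    exact ⟨U, hUV, fun A hA => ⟨0, fun n _ => hU n A hA⟩⟩
  push Not at htriv
  obtain ⟨N, hN⟩ := htriv
  obtain ⟨C, hCV, hC⟩ := h (V N) (hop N) (hcov N)
  -- Diagonalize: every `A ∈ I` lies eventually in `C j`, and then in some member of `V (N + j)`.
  obtain ⟨D, hD, hDseq⟩ := h {S | ∃ j, ∃ T ∈ V (N + j), S = C j ∩ T}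
    (by rintro S ⟨j, T, hT, rfl⟩; exact (hop N _ (hCV j)).inter (hop _ _ hT))
    (by
      intro A hA
      obtain ⟨m, hm⟩ := hC A hA
      obtain ⟨T, hT, hAT⟩ := hcov (N + m) A hA
      exact ⟨C m ∩ T, ⟨m, T, hT, rfl⟩, subset_inter (hm m le_rfl) hAT⟩)
  choose j T hT hDT using hD
  -- No `C i` contains all of `I`, so each index `i` is taken by `j` only finitely often.
  have hj_ne : ∀ i, ∀ᶠ r in atTop, j r ≠ i := by
    intro i
    obtain ⟨A, hA, hAC⟩ := hN (C i) (hCV i)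
    filter_upwards [isIdealSeq_iff.1 hDseq A hA] with r hr hri
    exact hAC (hri ▸ hr.trans (hDT r ▸ inter_subset_left))
  have hj : Tendsto j atTop cofinite := le_cofinite_iff_eventually_ne.2 hj_ne
  rw [Nat.cofinite_eq_atTop] at hj
  exact (hDseq.mono fun r => hDT r ▸ inter_subset_right).exists_subseq_mem_of_antitone
    hV (tendsto_atTop_mono (fun r => Nat.le_add_left _ N) hj) hT

section CommonFiber

variable {X : Type u}

def commonFiber (W : Set (Σ _ : ℕ, X)) (m : ℕ) : Set X :=
  {x | ∀ n ≤ m, (⟨n, x⟩ : Σ _ : ℕ, X) ∈ W}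

theorem subset_commonFiber_iff {W : Set (Σ _ : ℕ, X)} {m : ℕ} {A : Set X} :
    A ⊆ commonFiber W m ↔ (Iic m).sigma (fun _ => A) ⊆ W := by
  rw [sigma_subset_iff]
  exact ⟨fun h n hn x hx => h hx n hn, fun h x hx n hn => h hn hx⟩

end CommonFiber

section Sigma

variable {X : Type u} [TopologicalSpace X] {I : Set (Set X)}

/-- The ideal `I(Y)` on `Y = Σ n, X`. -/
def sigmaIdeal (I : Set (Set X)) : Set (Set (Σ _ : ℕ, X)) :=
  {F | IsCompact F ∧ ∀ n : ℕ, Sigma.mk n ⁻¹' F ∈ I}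

theorem IsCompactIdeal.empty_mem_of_mem (hI : IsCompactIdeal X I) {A : Set X} (hA : A ∈ I) :
    ∅ ∈ I := by
  simpa using hI.inter_compact_mem A hA ∅ isCompact_empty

theorem sigma_mem_sigmaIdeal (hI : IsCompactIdeal X I) {A : Set X} (hA : A ∈ I) {s : Set ℕ}
    (hs : s.Finite) : s.sigma (fun _ => A) ∈ sigmaIdeal I := by
  classical
  refine ⟨isCompact_sigma hs fun _ _ => hI.isCompact A hA, fun n => ?_⟩
  by_cases hn : n ∈ s
  · rwa [mk_preimage_sigma hn]
  · rw [mk_preimage_sigma_eq_empty hn]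
    exact hI.empty_mem_of_mem hA

theorem exists_subset_sigma_Iic_of_mem_sigmaIdeal (hI : IsCompactIdeal X I)
    {F : Set (Σ _ : ℕ, X)} (hF : F ∈ sigmaIdeal I) :
    ∃ A ∈ I, ∃ N, F ⊆ (Iic N).sigma fun _ => A := by
  obtain ⟨s, t, hs, -, rfl⟩ := hF.1.sigma_exists_finite_sigma_eq
  obtain ⟨N, hN⟩ := hs.bddAbove
  let A := (Finset.range (N + 1)).sup' Finset.nonempty_range_add_one
    fun n => Sigma.mk n ⁻¹' s.sigma t
  have hA : A ∈ I := Finset.sup'_induction _ _ hI.union_mem fun n _ => hF.2 n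
  refine ⟨A, hA, N, fun p hp => ⟨hN hp.1, ?_⟩⟩
  exact Finset.le_sup' (fun n => Sigma.mk n ⁻¹' s.sigma t)
    (Finset.mem_range_succ_iff.2 (hN hp.1)) hp

theorem isOpen_commonFiber {W : Set (Σ _ : ℕ, X)} (hW : IsOpen W) (m : ℕ) :
    IsOpen (commonFiber W m) := by
  have : commonFiber W m = ⋂ n ∈ Iic m, Sigma.mk n ⁻¹' W := by
    ext x
    simp [commonFiber]
  rw [this]
  exact (finite_Iic m).isOpen_biInter fun n _ => hW.preimage continuous_sigmaMk

theorem GammaIdeal.sigma (hI : IsCompactIdeal X I) (hX : GammaIdeal X I) :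
    GammaIdeal (Σ _ : ℕ, X) (sigmaIdeal I) := by
  intro γ hγ hcov
  let V : ℕ → Set (Set X) := fun k => {S | ∃ W ∈ γ, ∃ m ≥ k, S = commonFiber W m}
  have hV : Antitone V := fun a b hab S ⟨W, hW, m, hm, hS⟩ => ⟨W, hW, m, hab.trans hm, hS⟩
  have hop : ∀ k, ∀ S ∈ V k, IsOpen S := by
    rintro k S ⟨W, hW, m, -, rfl⟩
    exact isOpen_commonFiber (hγ W hW) m
  have hVcov : ∀ k, IsIdealCover I (V k) := by
    intro k A hA
    obtain ⟨W, hW, hAW⟩ := hcov _ (sigma_mem_sigmaIdeal hI hA (finite_Iic k))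
    exact ⟨_, ⟨W, hW, k, le_rfl, rfl⟩, subset_commonFiber_iff.2 hAW⟩
  obtain ⟨S, hSV, hS⟩ := hX.exists_isIdealSeq_of_antitone hV hop hVcov
  choose W hW m hm hSW using hSV
  refine ⟨W, hW, isIdealSeq_iff.2 fun F hF => ?_⟩
  obtain ⟨A, hA, N, hFA⟩ := exists_subset_sigma_Iic_of_mem_sigmaIdeal hI hF
  filter_upwards [isIdealSeq_iff.1 hS A hA, eventually_ge_atTop N] with n hAS hNn
  have hAW : (Iic (m n)).sigma (fun _ => A) ⊆ W n := subset_commonFiber_iff.1 (hSW n ▸ hAS)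
  exact hFA.trans <|
    (sigma_mono (Iic_subset_Iic.2 (hNn.trans (hm n))) fun _ => subset_rfl).trans hAW

theorem GammaIdeal.of_sigma (hI : IsCompactIdeal X I)
    (hY : GammaIdeal (Σ _ : ℕ, X) (sigmaIdeal I)) : GammaIdeal X I := by
  intro γ hγ hcov
  have hsnd : Continuous (Sigma.snd : (Σ _ : ℕ, X) → X) :=
    continuous_sigma fun _ => continuous_id
  obtain ⟨C, hCγ, hC⟩ := hY ((Sigma.snd ⁻¹' ·) '' γ)
    (forall_mem_image.2 fun U hU => (hγ U hU).preimage hsnd)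
    (by
      intro F hF
      obtain ⟨A, hA, N, hFA⟩ := exists_subset_sigma_Iic_of_mem_sigmaIdeal hI hF
      obtain ⟨U, hU, hAU⟩ := hcov A hA
      exact ⟨_, mem_image_of_mem _ hU, hFA.trans fun p hp => hAU hp.2⟩)
  choose U hU hUC using hCγ
  refine ⟨U, hU, fun A hA => ?_⟩
  obtain ⟨m, hm⟩ := hC _ (sigma_mem_sigmaIdeal hI hA (finite_singleton 0))
  refine ⟨m, fun n hn x hx => ?_⟩
  have hx' : (⟨0, x⟩ : Σ _ : ℕ, X) ∈ C n := hm n hn (mk_mem_sigma rfl hx)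
  rwa [← hUC n] at hx'

end Sigma

/-- `X` has property `γ_I` iff the countable direct topological sum of
copies of `X` has property `γ_{I(Y)}`. -/
theorem gammaIdeal_iff_gammaIdeal_sigma {X : Type u} [TopologicalSpace X]
    (I : Set (Set X)) (hI : IsCompactIdeal X I) :
    GammaIdeal X I ↔
      GammaIdeal (Σ _ : ℕ, X)
        {F : Set (Σ _ : ℕ, X) | IsCompact F ∧ ∀ n : ℕ, Sigma.mk n ⁻¹' F ∈ I} :=
  ⟨GammaIdeal.sigma hI, GammaIdeal.of_sigma hI⟩
end

section
/- Let Y be a metric space containing at least two points, and let X be a Y_𝓘-Tychonoff space for some ideal 𝓘 of compact sets in X. If H is a relatively Y_𝓘-Tychonoff subspace of C_𝓘(X,Y), then the tightness of H equals the 𝓘-Lindelöf degree of X: t(H) = 𝓘-Lin(X). In particular, t(C_𝓘(X,Y)) = 𝓘-Lin(X). -/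
open Set Filter Topology TopologicalSpace

universe u v

/-!
Near a continuous `f`, the `I`-open topology has the sets `{h | ∀ x ∈ K, dist (h x) (f x) < ε}`,
`K ∈ I`, `ε > 0`, as a neighbourhood base. If every open `I`-cover has a `κ`-small `I`-subcover and
`f ∈ closure A`, then for each `n` the open sets on which some `g ∈ A` is `1 / (n + 1)`-close to `f`
form an `I`-cover; the members of `A` indexing `κ`-small subcovers, over all `n`, accumulate at `f`.
Conversely, given an open `I`-cover `γ` and points `y₀ ≠ y₁`, the Tychonoff property makes the
constant `y₁` a limit of functions equal to `y₀` off some member of `γ`; the members of `γ`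
attached to a `κ`-small subfamily accumulating at `y₁` form an `I`-subcover.
-/

open Cardinal Metric

namespace IsCompactIdeal

variable {X : Type u} [TopologicalSpace X] {I : Set (Set X)}

theorem empty_mem (hI : IsCompactIdeal X I) (hne : I.Nonempty) : ∅ ∈ I := by
  obtain ⟨K, hK⟩ := hne
  simpa using hI.inter_compact_mem K hK ∅ isCompact_empty

theorem isEmpty_of_eq_empty (hI : IsCompactIdeal X I) (h : I = ∅) : IsEmpty X :=
  Set.univ_eq_empty_iff.1 (by simpa [h] using hI.sUnion_eq.symm)

end IsCompactIdeal

section UniformNeighbourhoods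

variable {X : Type u} {Y : Type v} [TopologicalSpace X] [PseudoMetricSpace Y]
  {I : Set (Set X)}

theorem IdealFn.isOpen_mapsTo {K : Set X} (hK : K ∈ I) {V : Set Y} (hV : IsOpen V) :
    IsOpen {h : IdealFn X Y I | MapsTo h K V} :=
  isOpen_generateFrom_of_mem ⟨K, hK, V, hV, rfl⟩

theorem IdealFn.exists_uniform_subset_of_isOpen (hI : IsCompactIdeal X I) (hIne : I.Nonempty)
    {O : Set (IdealFn X Y I)} (hO : IsOpen O) {f : IdealFn X Y I}
    (hf : Continuous (f : X → Y)) (hfO : f ∈ O) :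
    ∃ K ∈ I, ∃ ε > 0, {h : IdealFn X Y I | ∀ x ∈ K, dist (h x) (f x) < ε} ⊆ O := by
  induction hO with
  | basic s hs =>
    obtain ⟨K, hK, V, hV, rfl⟩ := hs
    obtain ⟨ε, hε, hεV⟩ := ((hI.isCompact K hK).image hf).exists_thickening_subset_open hV
      (mapsTo_iff_image_subset.1 hfO)
    exact ⟨K, hK, ε, hε, fun h hh x hx =>
      hεV (mem_thickening_iff.2 ⟨f x, mem_image_of_mem f hx, hh x hx⟩)⟩
  | univ => exact ⟨∅, hI.empty_mem hIne, 1, one_pos, subset_univ _⟩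
  | inter s t _ _ ihs iht =>
    obtain ⟨K₁, hK₁, ε₁, hε₁, hs⟩ := ihs hfO.1
    obtain ⟨K₂, hK₂, ε₂, hε₂, ht⟩ := iht hfO.2
    refine ⟨K₁ ∪ K₂, hI.union_mem _ hK₁ _ hK₂, min ε₁ ε₂, lt_min hε₁ hε₂, fun h hh => ⟨?_, ?_⟩⟩
    · exact hs fun x hx => (hh x (.inl hx)).trans_le (min_le_left _ _)
    · exact ht fun x hx => (hh x (.inr hx)).trans_le (min_le_right _ _)
  | sUnion S _ ih =>
    obtain ⟨s, hsS, hfs⟩ := hfO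
    obtain ⟨K, hK, ε, hε, hsub⟩ := ih s hsS hfs
    exact ⟨K, hK, ε, hε, hsub.trans (subset_sUnion_of_mem hsS)⟩

/-- Cover `K` by finitely many pieces on which `f` varies by at most `ε / 4`; the pieces lie in
`I`, and a function mapping each piece into the `ε / 2`-ball around the value of `f` at its
centre is `ε`-close to `f` on `K`. -/
theorem IdealFn.uniform_mem_nhds (hI : IsCompactIdeal X I) {f : IdealFn X Y I}
    (hf : Continuous (f : X → Y)) {K : Set X} (hK : K ∈ I) {ε : ℝ} (hε : 0 < ε) :
    {h : IdealFn X Y I | ∀ x ∈ K, dist (h x) (f x) < ε} ∈ 𝓝 f := by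
  have hKc := hI.isCompact K hK
  obtain ⟨t, ht⟩ := hKc.elim_finite_subcover (fun j : X => f ⁻¹' ball (f j) (ε / 4))
    (fun j => isOpen_ball.preimage hf) fun x _ => mem_iUnion.2 ⟨x, mem_ball_self (by positivity)⟩
  let piece : X → Set X := fun j => K ∩ f ⁻¹' closedBall (f j) (ε / 4)
  have piece_mem : ∀ j, piece j ∈ I := fun j => by
    simpa [piece, ← inter_assoc] using
      hI.inter_compact_mem K hK _ (hKc.inter_right (isClosed_closedBall.preimage hf))
  have hnhds : ∀ j ∈ t, {h : IdealFn X Y I | MapsTo h (piece j) (ball (f j) (ε / 2))} ∈ 𝓝 f :=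
    fun j _ => (IdealFn.isOpen_mapsTo (piece_mem j) isOpen_ball).mem_nhds fun x hx =>
      (mem_closedBall.1 hx.2).trans_lt (by linarith)
  refine Filter.mem_of_superset ((Filter.biInter_finset_mem t).2 hnhds) fun h hh x hx => ?_
  obtain ⟨j, hj, hxj⟩ := mem_iUnion₂.1 (ht hx)
  have hhx : dist (h x) (f j) < ε / 2 :=
    mem_iInter₂.1 hh j hj ⟨hx, ball_subset_closedBall hxj⟩
  have hfx : dist (f x) (f j) < ε / 4 := hxj
  linarith [dist_triangle_right (h x) (f x) (f j)]

theorem IdealFn.nhds_hasBasis_uniform (hI : IsCompactIdeal X I) (hIne : I.Nonempty)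
    {f : IdealFn X Y I} (hf : Continuous (f : X → Y)) :
    (𝓝 f).HasBasis (fun p : Set X × ℝ => p.1 ∈ I ∧ 0 < p.2)
      fun p => {h : IdealFn X Y I | ∀ x ∈ p.1, dist (h x) (f x) < p.2} := by
  refine ⟨fun O => ⟨fun hO => ?_, fun ⟨p, ⟨hK, hε⟩, hpO⟩ =>
    Filter.mem_of_superset (IdealFn.uniform_mem_nhds hI hf hK hε) hpO⟩⟩
  obtain ⟨O', hO'O, hO', hfO'⟩ := mem_nhds_iff.1 hO
  obtain ⟨K, hK, ε, hε, hsub⟩ := IdealFn.exists_uniform_subset_of_isOpen hI hIne hO' hf hfO'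
  exact ⟨(K, ε), ⟨hK, hε⟩, hsub.trans hO'O⟩

theorem IdealFn.mem_closure_iff_uniform (hI : IsCompactIdeal X I) (hIne : I.Nonempty)
    {H : Set (IdealFn X Y I)} {A : Set H} {z : H} (hz : Continuous ((z : IdealFn X Y I) : X → Y)) :
    z ∈ closure A ↔ ∀ K ∈ I, ∀ ε > 0, ∃ g ∈ A,
      ∀ x ∈ K, dist ((g : IdealFn X Y I) x) ((z : IdealFn X Y I) x) < ε := by
  rw [closure_subtype, mem_closure_iff_nhds_basis (IdealFn.nhds_hasBasis_uniform hI hIne hz)]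
  simp only [Prod.forall, and_imp, mem_image, exists_exists_and_eq_and]
  exact ⟨fun h K hK ε hε => h K ε hK hε, fun h K ε hK hε => h K hK ε hε⟩

end UniformNeighbourhoods

theorem RelTychonoffSub.exists_const_on_const_off {X : Type u} {Y : Type v} [TopologicalSpace X]
    [TopologicalSpace Y] {I : Set (Set X)} {H : Set (X → Y)}
    (hrel : RelTychonoffSub I univ H {f | Continuous f}) {A F : Set X} (hA : IsClosed A)
    (hF : F ∈ I) (hFA : F ⊆ Aᶜ) (y₀ y₁ : Y) :
    ∃ g ∈ H, (∀ x ∈ F, g x = y₁) ∧ ∀ x ∈ A, g x = y₀ := by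
  obtain ⟨g, hgH, hgF, hgA⟩ := hrel A hA F hF hFA y₀ (mem_univ _) (fun _ => y₁) continuous_const
    ((finite_singleton y₁).subset (image_subset_iff.2 fun _ _ => rfl)) (subset_univ _)
  exact ⟨g, hgH, fun x hx => hgF hx, fun x hx => hgA (mem_image_of_mem g hx)⟩

theorem IdealYTychonoff.relTychonoffSub_continuous {X : Type u} {Y : Type v}
    [TopologicalSpace X] [TopologicalSpace Y] {I : Set (Set X)} (hXT : IdealYTychonoff X Y I) :
    RelTychonoffSub I univ {f : X → Y | Continuous f} {f | Continuous f} := by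
  intro A hA F hF hFA y₀ _ f hf hfin _
  obtain ⟨g, hgc, hgf, hgA⟩ := hXT A hA y₀ F hF hFA (fun x : F => f x)
    ((show Continuous f from hf).comp continuous_subtype_val)
    (hfin.subset (range_subset_iff.2 fun x => mem_image_of_mem f x.2))
  exact ⟨g, hgc, fun x hx => hgf ⟨x, hx⟩, hgA⟩

theorem Cardinal.mk_iUnion_nat_le {α : Type u} {κ : Cardinal.{u}} (hκ : ℵ₀ ≤ κ)
    (s : ℕ → Set α) (hs : ∀ n, #(s n) ≤ κ) : #(⋃ n, s n) ≤ κ := by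
  have := mk_iUnion_le_lift s
  rw [lift_uzero, mk_nat, lift_aleph0] at this
  refine this.trans ((mul_le_mul_right (ciSup_le' fun n => ?_) _).trans (aleph0_mul_eq hκ).le)
  simpa using hs n

theorem csInf_infinite_le_csInf_infinite {P Q : Cardinal.{u} → Prop}
    (hQ : ∃ κ, ℵ₀ ≤ κ ∧ Q κ) (hQP : ∀ κ, ℵ₀ ≤ κ → Q κ → P κ) :
    sInf {κ | ℵ₀ ≤ κ ∧ P κ} ≤ sInf {κ | ℵ₀ ≤ κ ∧ Q κ} :=
  csInf_le_csInf (OrderBot.bddBelow _) hQ fun κ hκ => ⟨hκ.1, hQP κ hκ.1 hκ.2⟩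

def HasTightnessLE (Z : Type u) [TopologicalSpace Z] (κ : Cardinal.{u}) : Prop :=
  ∀ (A : Set Z) (z : Z), z ∈ closure A → ∃ B : Set Z, B ⊆ A ∧ #B ≤ κ ∧ z ∈ closure B

def HasIdealLindelofLE (X : Type u) [TopologicalSpace X] (I : Set (Set X))
    (κ : Cardinal.{u}) : Prop :=
  ∀ γ : Set (Set X), (∀ U ∈ γ, IsOpen U) → IsIdealCover I γ →
    ∃ γ' : Set (Set X), γ' ⊆ γ ∧ #γ' ≤ κ ∧ IsIdealCover I γ'

theorem HasIdealLindelofLE.exists_indexed_subcover {X : Type u} [TopologicalSpace X]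
    {I : Set (Set X)} {κ : Cardinal.{u}} (hL : HasIdealLindelofLE X I κ) {ι : Type u}
    {U : ι → Set X} (hU : ∀ i, IsOpen (U i)) (hcov : ∀ K ∈ I, ∃ i, K ⊆ U i) :
    ∃ S : Set ι, #S ≤ κ ∧ ∀ K ∈ I, ∃ i ∈ S, K ⊆ U i := by
  obtain ⟨γ', hγ', hcard, hγ'cov⟩ := hL (range U) (forall_mem_range.2 hU) fun K hK =>
    let ⟨i, hi⟩ := hcov K hK
    ⟨U i, mem_range_self i, hi⟩
  choose idx hidx using fun V : γ' => hγ' V.2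
  refine ⟨range idx, mk_range_le.trans hcard, fun K hK => ?_⟩
  obtain ⟨V, hV, hKV⟩ := hγ'cov K hK
  exact ⟨idx ⟨V, hV⟩, mem_range_self _, (hidx ⟨V, hV⟩).symm ▸ hKV⟩

theorem hasTightnessLE_of_mk_le {Z : Type u} [TopologicalSpace Z] {κ : Cardinal.{u}}
    (h : #Z ≤ κ) : HasTightnessLE Z κ :=
  fun A _ hz => ⟨A, subset_rfl, (mk_set_le A).trans h, hz⟩

theorem hasIdealLindelofLE_of_mk_le {X : Type u} [TopologicalSpace X] (I : Set (Set X))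
    {κ : Cardinal.{u}} (h : #(Set X) ≤ κ) : HasIdealLindelofLE X I κ :=
  fun γ _ hγ => ⟨γ, subset_rfl, (mk_set_le γ).trans h, hγ⟩

section Tightness

variable {X Y : Type u} [TopologicalSpace X] [MetricSpace Y] {I : Set (Set X)}
  {H : Set (IdealFn X Y I)}

theorem hasTightnessLE_of_hasIdealLindelofLE (hI : IsCompactIdeal X I)
    (hHC : ∀ f ∈ H, Continuous (f : X → Y)) {κ : Cardinal.{u}} (hκ : ℵ₀ ≤ κ)
    (hL : HasIdealLindelofLE X I κ) : HasTightnessLE H κ := by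
  intro A z hz
  rcases I.eq_empty_or_nonempty with hIempty | hIne
  · have := hI.isEmpty_of_eq_empty hIempty
    obtain ⟨a, ha⟩ := closure_nonempty_iff.1 ⟨z, hz⟩
    have hza : z = a := Subtype.ext (funext isEmptyElim)
    exact ⟨{a}, singleton_subset_iff.2 ha, by simpa using one_le_aleph0.trans hκ,
      hza ▸ subset_closure rfl⟩
  have hzc : Continuous ((z : IdealFn X Y I) : X → Y) := hHC z z.2
  rw [IdealFn.mem_closure_iff_uniform hI hIne hzc] at hz
  let U : ℕ → A → Set X := fun n g =>
    {x | dist ((g : IdealFn X Y I) x) ((z : IdealFn X Y I) x) < 1 / (n + 1)}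
  have hU : ∀ n g, IsOpen (U n g) := fun n g =>
    isOpen_lt ((hHC _ g.1.2).dist hzc) continuous_const
  have hcov : ∀ n, ∀ K ∈ I, ∃ g, K ⊆ U n g := fun n K hK =>
    let ⟨g, hgA, hg⟩ := hz K hK _ Nat.one_div_pos_of_nat
    ⟨⟨g, hgA⟩, hg⟩
  choose S hScard hScov using fun n => hL.exists_indexed_subcover (hU n) (hcov n)
  refine ⟨⋃ n, Subtype.val '' S n, iUnion_subset fun n => image_subset_iff.2 fun g _ => g.2,
    mk_iUnion_nat_le hκ _ fun n => mk_image_le.trans (hScard n), ?_⟩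
  rw [IdealFn.mem_closure_iff_uniform hI hIne hzc]
  intro K hK ε hε
  obtain ⟨n, hn⟩ := exists_nat_one_div_lt hε
  obtain ⟨g, hgS, hKg⟩ := hScov n K hK
  exact ⟨g, mem_iUnion.2 ⟨n, mem_image_of_mem _ hgS⟩, fun x hx => (hKg hx).trans hn⟩

theorem hasIdealLindelofLE_of_hasTightnessLE [Nontrivial Y] (hI : IsCompactIdeal X I)
    (hHC : ∀ f ∈ H, Continuous (f : X → Y))
    (hrel : RelTychonoffSub I univ H {f : X → Y | Continuous f}) {κ : Cardinal.{u}}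
    (hT : HasTightnessLE H κ) : HasIdealLindelofLE X I κ := by
  intro γ hγo hγ
  rcases I.eq_empty_or_nonempty with rfl | hIne
  · exact ⟨∅, empty_subset _, by simp, fun K hK => absurd hK (notMem_empty K)⟩
  obtain ⟨y₀, y₁, hy⟩ := exists_pair_ne Y
  obtain ⟨c, hcH, -, hc⟩ :=
    hrel.exists_const_on_const_off isClosed_univ (hI.empty_mem hIne) (by simp) y₁ y₁
  let z : H := ⟨c, hcH⟩
  have hzc : Continuous ((z : IdealFn X Y I) : X → Y) := hHC c hcH
  let A : Set H := {g | ∃ U ∈ γ, ∀ x ∉ U, (g : IdealFn X Y I) x = y₀}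
  have hzA : z ∈ closure A := by
    rw [IdealFn.mem_closure_iff_uniform hI hIne hzc]
    intro K hK ε hε
    obtain ⟨U, hUγ, hKU⟩ := hγ K hK
    obtain ⟨g, hgH, hgK, hgU⟩ := hrel.exists_const_on_const_off (hγo U hUγ).isClosed_compl hK
      (by rwa [compl_compl]) y₀ y₁
    refine ⟨⟨g, hgH⟩, ⟨U, hUγ, hgU⟩, fun x hx => ?_⟩
    simpa [z, hgK x hx, hc x (mem_univ x)] using hε
  obtain ⟨B, hBA, hBκ, hzB⟩ := hT A z hzA
  choose U hUγ hU using fun b : B => hBA b.2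
  refine ⟨range U, range_subset_iff.2 hUγ, mk_range_le.trans hBκ, fun K hK => ?_⟩
  rw [IdealFn.mem_closure_iff_uniform hI hIne hzc] at hzB
  obtain ⟨b, hbB, hb⟩ := hzB K hK (dist y₀ y₁) (dist_pos.2 hy)
  refine ⟨U ⟨b, hbB⟩, mem_range_self _, fun x hx => by_contra fun hxU => ?_⟩
  have hbx := hb x hx
  rw [hU ⟨b, hbB⟩ x hxU, show (z : IdealFn X Y I) x = y₁ from hc x (mem_univ x)] at hbx
  exact lt_irrefl _ hbx

theorem tightnessCard_eq_idealLindelofDeg_of_relTychonoffSub [Nontrivial Y]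
    (hI : IsCompactIdeal X I) (hHC : ∀ f ∈ H, Continuous (f : X → Y))
    (hrel : RelTychonoffSub I univ H {f : X → Y | Continuous f}) :
    tightnessCard H = idealLindelofDeg X I :=
  le_antisymm
    (csInf_infinite_le_csInf_infinite (P := HasTightnessLE H) (Q := HasIdealLindelofLE X I)
      ⟨_, le_max_left _ _, hasIdealLindelofLE_of_mk_le I (le_max_right ℵ₀ #(Set X))⟩
      fun _ hκ hL => hasTightnessLE_of_hasIdealLindelofLE hI hHC hκ hL)
    (csInf_infinite_le_csInf_infinite (P := HasIdealLindelofLE X I) (Q := HasTightnessLE H)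
      ⟨_, le_max_left _ _, hasTightnessLE_of_mk_le (le_max_right ℵ₀ #H)⟩
      fun _ _ hT => hasIdealLindelofLE_of_hasTightnessLE hI hHC hrel hT)

end Tightness

/-- Let `Y` be a metric space with at least two points and `X` a
`Y_I`-Tychonoff space. If `H` is a relatively `Y_I`-Tychonoff subspace of `C_I(X,Y)`,
then `t(H) = I-Lin(X)`; in particular `t(C_I(X,Y)) = I-Lin(X)`. -/
theorem tightness_eq_idealLindelofDeg {X Y : Type u}
    [TopologicalSpace X] [MetricSpace Y] [Nontrivial Y]
    (I : Set (Set X)) (hI : IsCompactIdeal X I)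
    (hXT : IdealYTychonoff X Y I)
    (H : Set (IdealFn X Y I))
    (hHC : ∀ f ∈ H, Continuous (f : X → Y))
    (hrel : RelTychonoffSub I (Set.univ : Set Y) H {f : X → Y | Continuous f}) :
    tightnessCard ↥H = idealLindelofDeg X I ∧
    tightnessCard ↥{f : IdealFn X Y I | Continuous (f : X → Y)} = idealLindelofDeg X I :=
  ⟨tightnessCard_eq_idealLindelofDeg_of_relTychonoffSub hI hHC hrel,
    tightnessCard_eq_idealLindelofDeg_of_relTychonoffSub hI (fun _ hf => hf)
      hXT.relTychonoffSub_continuous⟩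
end

section
/- Let Y be a Tychonoff space that is not pseudocompact, let X be a Y-Tychonoff space containing a discrete family {U_i}_{i∈ω₁} of nonempty open subsets indexed by the first uncountable ordinal, and let 𝓘 be an ideal of compact sets in X. Then every subspace H of Y^X, equipped with the 𝓘-open topology, that contains C(X,Y) is not a normal space. -/
open Set Filter Topology TopologicalSpace

universe u v

/-!
A continuous unbounded `f : Y → ℝ` yields a closed copy `y : ℕ → Y` of `ℕ` (take points whose
values `|f|` are `1`-separated). Pick `x i ∈ U i`; gluing over the discrete family `U` the
`Y`-Tychonoff bumps that send `x i` to `y (s i)` and equal `y 0` off `U i` gives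
a map `φ : ℕ^ι → H`, continuous because a compact set meets only finitely many `U i`. Evaluation
at the points `x i` is a continuous `r : H → Y^ι` with `r ∘ φ = y^ι`, a closed embedding. So the
two disjoint closed sets of Stone's proof that `ℕ^ω₁` is not normal (the functions injective off
the fibre over `0`, resp. `1`) pull back to disjoint closed subsets of `H`, and a separation of
those in `H` would separate Stone's sets in `ℕ^ω₁`.
-/

section PiTopology

variable {ι A : Type*} [TopologicalSpace A]

theorem IsOpen.exists_finset_eqOn_mem {G : Set (ι → A)} (hG : IsOpen G) {s : ι → A}
    (hs : s ∈ G) : ∃ T : Finset ι, ∀ t, EqOn t s T → t ∈ G := by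
  obtain ⟨T, u, hu, hTu⟩ := isOpen_pi_iff.mp hG s hs
  exact ⟨T, fun t ht => hTu fun i hi => ht hi ▸ (hu i hi).2⟩

theorem isOpen_of_forall_exists_finset_eqOn_mem [DiscreteTopology A] {G : Set (ι → A)}
    (h : ∀ s ∈ G, ∃ T : Finset ι, ∀ t, EqOn t s T → t ∈ G) : IsOpen G := by
  refine isOpen_pi_iff.mpr fun s hs => ?_
  obtain ⟨T, hT⟩ := h s hs
  exact ⟨T, fun i => {s i}, fun i _ => ⟨isOpen_discrete _, rfl⟩, fun t ht => hT t ht⟩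

end PiTopology

section InjOffFiber

variable {ι α : Type*}

def injOffFiber (a : α) : Set (ι → α) := {s | InjOn s {i | s i ≠ a}}

theorem isClosed_injOffFiber [TopologicalSpace α] [DiscreteTopology α] (a : α) :
    IsClosed (injOffFiber (ι := ι) a) := by
  have : injOffFiber (ι := ι) a = ⋂ i, ⋂ j, {s | s i ≠ a → s i = s j → i = j} := by
    ext s
    simp only [injOffFiber, InjOn, mem_ofPred_eq, mem_iInter]
    exact ⟨fun h i j hi hij => h hi (hij ▸ hi) hij, fun h i hi j _ hij => h i j hi hij⟩
  rw [this]
  exact isClosed_iInter fun i => isClosed_iInter fun j =>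
    (isClosed_discrete {p : α × α | p.1 ≠ a → p.1 = p.2 → i = j}).preimage
      (by fun_prop : Continuous fun s : ι → α => (s i, s j))

theorem disjoint_injOffFiber [Countable α] (hι : ¬ Countable ι) {a b : α} (hab : a ≠ b) :
    Disjoint (injOffFiber (ι := ι) a) (injOffFiber b) := by
  refine Set.disjoint_left.mpr fun s ha hb => hι (Function.Injective.countable (f := s) ?_)
  intro i j hij
  by_cases hi : s i = a
  · exact hb (show s i ≠ b from hi ▸ hab) (show s j ≠ b from hij ▸ hi ▸ hab) hij
  · exact ha hi (show s j ≠ a from hij ▸ hi) hij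

end InjOffFiber

/-- A finite stage of Stone's construction; the values `0` and `1` are reserved for the two sets
being separated. -/
structure StoneApprox (ι : Type*) where
  dom : Finset ι
  val : ι → ℕ
  injOn : InjOn val dom
  two_le : ∀ i ∈ dom, 2 ≤ val i

namespace StoneApprox

variable {ι : Type*}

instance : Preorder (StoneApprox ι) where
  le p q := p.dom ⊆ q.dom ∧ EqOn q.val p.val p.dom
  le_refl _ := ⟨subset_rfl, fun _ _ => rfl⟩
  le_trans _ _ _ hpq hqr := ⟨hpq.1.trans hqr.1, fun _ hi => (hqr.2 (hpq.1 hi)).trans (hpq.2 hi)⟩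

instance : Inhabited (StoneApprox ι) := ⟨⟨∅, 0, by simp, by simp⟩⟩

open Classical in
noncomputable def point (p : StoneApprox ι) : ι → ℕ := p.dom.piecewise p.val 0

theorem point_eq_val {p : StoneApprox ι} {i : ι} (hi : i ∈ p.dom) : p.point i = p.val i := by
  classical
  exact Finset.piecewise_eq_of_mem _ _ _ hi

theorem point_mem_injOffFiber (p : StoneApprox ι) : p.point ∈ injOffFiber 0 := by
  classical
  have hdom : ∀ {i}, p.point i ≠ 0 → i ∈ p.dom := fun {i} hi => by
    by_contra h
    exact hi (Finset.piecewise_eq_of_notMem _ _ _ h)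
  intro i hi j hj hij
  rw [point_eq_val (hdom hi), point_eq_val (hdom hj)] at hij
  exact p.injOn (hdom hi) (hdom hj) hij

theorem exists_le_subset_dom (p : StoneApprox ι) (T : Finset ι) : ∃ q, p ≤ q ∧ T ⊆ q.dom := by
  classical
  obtain ⟨e, he⟩ := Set.countable_iff_exists_injOn.mp T.finite_toSet.countable
  set N := 2 + p.dom.sup p.val
  have hlt : ∀ i ∈ p.dom, p.val i < N := fun i hi => by
    have := Finset.le_sup (f := p.val) hi
    omega
  let val i := if i ∈ p.dom then p.val i else N + e i
  have hT : ∀ {i}, i ∈ p.dom ∪ T → i ∉ p.dom → i ∈ T := fun hi h =>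
    (Finset.mem_union.mp hi).resolve_left h
  refine ⟨⟨p.dom ∪ T, val, ?_, fun i _ => ?_⟩,
    ⟨Finset.subset_union_left, fun i hi => if_pos hi⟩, Finset.subset_union_right⟩
  · intro i hi j hj hij
    by_cases hip : i ∈ p.dom <;> by_cases hjp : j ∈ p.dom <;>
      simp only [val, hip, hjp, if_true, if_false] at hij
    · exact p.injOn hip hjp hij
    · exact absurd hij (by have := hlt i hip; omega)
    · exact absurd hij (by have := hlt j hjp; omega)
    · exact he (hT hi hip) (hT hj hjp) (by omega)
  · by_cases hip : i ∈ p.dom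
    · simpa [val, hip] using p.two_le i hip
    · simp only [val, hip, if_false]
      omega

open Classical in
noncomputable def limit (c : ℕ → StoneApprox ι) (i : ι) : ℕ :=
  if h : ∃ m, i ∈ (c m).dom then (c (Nat.find h)).val i else 1

variable {c : ℕ → StoneApprox ι}

theorem limit_eq (hc : Monotone c) {m : ℕ} {i : ι} (hi : i ∈ (c m).dom) :
    limit c i = (c m).val i := by
  classical
  have h : ∃ m, i ∈ (c m).dom := ⟨m, hi⟩
  rw [limit, dif_pos h]
  exact ((hc (Nat.find_min' h hi)).2 (Nat.find_spec h)).symm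

theorem limit_mem_injOffFiber (hc : Monotone c) : limit c ∈ injOffFiber 1 := by
  classical
  have hdom : ∀ {i}, limit c i ≠ 1 → ∃ m, i ∈ (c m).dom := fun {i} hi => by
    by_contra h
    exact hi (dif_neg h)
  intro i hi j hj hij
  obtain ⟨m, hm⟩ := hdom hi
  obtain ⟨n, hn⟩ := hdom hj
  have hmM := (hc (le_max_left m n)).1 hm
  have hnM := (hc (le_max_right m n)).1 hn
  rw [limit_eq hc hmM, limit_eq hc hnM] at hij
  exact (c (max m n)).injOn hmM hnM hij

theorem exists_subset_dom (hc : Monotone c) (T : Finset ι) :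
    ∃ M, ∀ i ∈ T, ∀ m, i ∈ (c m).dom → i ∈ (c M).dom := by
  classical
  have hdir : Directed (· ⊆ ·) fun m => ((c m).dom : Set ι) :=
    Monotone.directed_le fun _ _ h => Finset.coe_subset.mpr (hc h).1
  obtain ⟨M, hM⟩ := hdir.exists_mem_subset_of_finset_subset_biUnion
    (s := T.filter fun i => ∃ m, i ∈ (c m).dom) fun i hi => by
      simpa using (Finset.mem_filter.mp hi).2
  exact ⟨M, fun i hi m hm => hM (Finset.mem_filter.mpr ⟨hi, m, hm⟩)⟩

end StoneApprox

open StoneApprox in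
/-- Stone's argument: extend stages so that every point agreeing with stage `m` on the domain of
stage `m + 1` lies in `G₀`. The limit `w` of the stages lies in `G₁`, and a point agreeing with `w`
on the finitely many coordinates that control `G₁` near `w`, and with a late stage elsewhere, lies
in both. -/
theorem not_separatedNhds_injOffFiber {ι : Type*} :
    ¬ SeparatedNhds (injOffFiber (ι := ι) (0 : ℕ)) (injOffFiber 1) := by
  classical
  rintro ⟨G₀, G₁, hG₀, hG₁, h₀, h₁, hG⟩
  have step : ∀ p : StoneApprox ι, ∃ q, p ≤ q ∧ ∀ u, EqOn u p.point q.dom → u ∈ G₀ := by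
    intro p
    obtain ⟨T, hT⟩ := hG₀.exists_finset_eqOn_mem (h₀ p.point_mem_injOffFiber)
    obtain ⟨q, hpq, hTq⟩ := p.exists_le_subset_dom T
    exact ⟨q, hpq, fun u hu => hT u (hu.mono hTq)⟩
  choose next le_next hnext using step
  set c : ℕ → StoneApprox ι := fun m => next^[m] default
  have hc_succ : ∀ m, c (m + 1) = next (c m) := fun m => Function.iterate_succ_apply' ..
  have hc : Monotone c := monotone_nat_of_le_succ fun m => hc_succ m ▸ le_next (c m)
  obtain ⟨T, hT⟩ := hG₁.exists_finset_eqOn_mem (h₁ (limit_mem_injOffFiber hc))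
  obtain ⟨M, hM⟩ := exists_subset_dom hc T
  set u := T.piecewise (limit c) (c M).point
  have hu₀ : u ∈ G₀ := by
    refine hnext (c M) u fun i hi => ?_
    rw [← hc_succ] at hi
    by_cases hiT : i ∈ T
    · rw [show u i = limit c i from Finset.piecewise_eq_of_mem _ _ _ hiT, limit_eq hc hi,
        point_eq_val (hM i hiT _ hi), (hc M.le_succ).2 (hM i hiT _ hi)]
    · exact Finset.piecewise_eq_of_notMem _ _ _ hiT
  have hu₁ : u ∈ G₁ := hT u fun i hi => Finset.piecewise_eq_of_mem _ _ _ hi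
  exact Set.disjoint_left.mp hG hu₀ hu₁

theorem not_normalSpace_of_isClosedEmbedding_comp {ι Z T : Type*} [TopologicalSpace Z]
    [TopologicalSpace T] (hι : ¬ Countable ι) {φ : (ι → ℕ) → Z} {r : Z → T}
    (hφ : Continuous φ) (hr : Continuous r) (hrφ : IsClosedEmbedding (r ∘ φ)) :
    ¬ NormalSpace Z := by
  intro _
  let F : ℕ → Set Z := fun k => r ⁻¹' (r ∘ φ '' injOffFiber k)
  have hF : ∀ k, IsClosed (F k) := fun k =>
    (hrφ.isClosedMap _ (isClosed_injOffFiber k)).preimage hr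
  have hdisj : Disjoint (F 0) (F 1) :=
    ((disjoint_image_iff hrφ.injective).mpr (disjoint_injOffFiber hι zero_ne_one)).preimage r
  exact not_separatedNhds_injOffFiber <| ((normal_separation (hF 0) (hF 1) hdisj).preimage hφ).mono
    (fun s hs => ⟨s, hs, rfl⟩) (fun s hs => ⟨s, hs, rfl⟩)

section ClosedDiscreteSequence

variable {Y : Type*} [TopologicalSpace Y]

theorem isClosedEmbedding_of_pairwise_le_dist_comp [T1Space Y] {α γ : Type*}
    [TopologicalSpace α] [DiscreteTopology α] [PseudoMetricSpace γ] {g : Y → γ}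
    (hg : Continuous g) {ε : ℝ} (hε : 0 < ε) {y : α → Y}
    (hy : Pairwise fun m n => ε ≤ dist (g (y m)) (g (y n))) : IsClosedEmbedding y := by
  have hinj : Function.Injective y := fun m n hmn => by
    by_contra hne
    have : ε ≤ dist (g (y m)) (g (y n)) := hy hne
    rw [hmn, dist_self] at this
    linarith
  have hlf : LocallyFinite fun n => ({y n} : Set Y) := by
    intro z
    refine ⟨g ⁻¹' Metric.ball (g z) (ε / 2),
      (Metric.isOpen_ball.preimage hg).mem_nhds (Metric.mem_ball_self (half_pos hε)), ?_⟩
    refine Set.Subsingleton.finite fun m hm n hn => ?_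
    obtain ⟨_, rfl, hm⟩ := hm
    obtain ⟨_, rfl, hn⟩ := hn
    by_contra hne
    have := dist_triangle_right (g (y m)) (g (y n)) (g z)
    linarith [hy hne, Metric.mem_ball.mp hm, Metric.mem_ball.mp hn]
  refine IsClosedEmbedding.of_continuous_injective_isClosedMap continuous_of_discreteTopology
    hinj fun S _ => ?_
  have : y '' S = ⋃ n : S, {y n} := by ext; simp
  rw [this]
  exact (hlf.comp_injective Subtype.val_injective).isClosed_iUnion fun _ => isClosed_singleton

theorem pairwise_le_dist_of_add_le_succ {a : ℕ → ℝ} {ε : ℝ} (h : ∀ n, a n + ε ≤ a (n + 1)) :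
    Pairwise fun m n => ε ≤ dist (a m) (a n) := by
  rcases le_total ε 0 with hε | hε
  · exact fun m n _ => hε.trans dist_nonneg
  have hmono : Monotone a := monotone_nat_of_le_succ fun n => by linarith [h n]
  have hlt : ∀ {m n}, m < n → ε ≤ dist (a m) (a n) := fun {m n} hmn => by
    rw [Real.dist_eq, abs_sub_comm]
    exact le_abs.mpr (Or.inl (by linarith [h m, hmono (Nat.succ_le_of_lt hmn)]))
  intro m n hmn
  rcases hmn.lt_or_gt with hmn | hmn
  · exact hlt hmn
  · exact dist_comm (a m) (a n) ▸ hlt hmn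

theorem exists_isClosedEmbedding_nat_of_not_isBounded [T1Space Y] {f : Y → ℝ} (hf : Continuous f)
    (hfb : ¬ Bornology.IsBounded (range f)) : ∃ y : ℕ → Y, IsClosedEmbedding y := by
  have hlarge : ∀ r : ℝ, ∃ z, r < |f z| := by
    simpa [isBounded_iff_forall_norm_le, Real.norm_eq_abs] using hfb
  choose g hg using hlarge
  let y : ℕ → Y := fun n => (fun z => g (|f z| + 1))^[n] (g 0)
  have hy : ∀ n, |f (y n)| + 1 ≤ |f (y (n + 1))| := fun n => by
    simp only [y, Function.iterate_succ_apply']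
    exact (hg _).le
  exact ⟨y, isClosedEmbedding_of_pairwise_le_dist_comp hf.abs one_pos
    (pairwise_le_dist_of_add_le_succ hy)⟩

end ClosedDiscreteSequence

section DiscreteFamily

variable {ι X Y : Type*} {U : ι → Set X} {g g' : ι → X → Y} {y₀ : Y}

open Classical in
noncomputable def glue (U : ι → Set X) (g : ι → X → Y) (y₀ : Y) (x : X) : Y :=
  if h : ∃ i, x ∈ U i then g h.choose x else y₀

theorem glue_eq_of_forall_notMem {x : X} (hx : ∀ i, x ∉ U i) : glue U g y₀ x = y₀ := by
  rw [glue, dif_neg (not_exists.mpr hx)]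

theorem eqOn_glue {K : Set X} (h : ∀ i, (U i ∩ K).Nonempty → g i = g' i) :
    EqOn (glue U g y₀) (glue U g' y₀) K := by
  intro x hx
  by_cases hU : ∃ i, x ∈ U i
  · simp only [glue, dif_pos hU, h _ ⟨x, hU.choose_spec, hx⟩]
  · rw [glue_eq_of_forall_notMem (not_exists.mp hU), glue_eq_of_forall_notMem (not_exists.mp hU)]

variable [TopologicalSpace X]

def IsDiscreteFamily (U : ι → Set X) : Prop :=
  ∀ x : X, ∃ V : Set X, IsOpen V ∧ x ∈ V ∧ {i : ι | (V ∩ U i).Nonempty}.Subsingleton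

theorem IsDiscreteFamily.eq_of_mem (hU : IsDiscreteFamily U) {x : X} {i j : ι} (hi : x ∈ U i)
    (hj : x ∈ U j) : i = j := by
  obtain ⟨V, -, hxV, hV⟩ := hU x
  exact hV ⟨x, hxV, hi⟩ ⟨x, hxV, hj⟩

theorem IsDiscreteFamily.locallyFinite (hU : IsDiscreteFamily U) : LocallyFinite U := by
  intro x
  obtain ⟨V, hVo, hxV, hV⟩ := hU x
  exact ⟨V, hVo.mem_nhds hxV, by simpa only [inter_comm] using hV.finite⟩

theorem glue_eq_of_mem (hU : IsDiscreteFamily U) {x : X} {i : ι} (hx : x ∈ U i) :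
    glue U g y₀ x = g i x := by
  have h : ∃ i, x ∈ U i := ⟨i, hx⟩
  rw [glue, dif_pos h, hU.eq_of_mem h.choose_spec hx]

/-- Near each point `glue U g y₀` agrees with a single `g i`, or with `y₀`. -/
theorem continuous_glue [TopologicalSpace Y] (hU : IsDiscreteFamily U)
    (hg : ∀ i, Continuous (g i)) (hg₀ : ∀ i, ∀ x ∉ U i, g i x = y₀) :
    Continuous (glue U g y₀) := by
  refine continuous_iff_continuousAt.mpr fun x => ?_
  obtain ⟨V, hVo, hxV, hV⟩ := hU x
  by_cases hi : ∃ i, (V ∩ U i).Nonempty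
  · obtain ⟨i, hi⟩ := hi
    refine (hg i).continuousAt.congr (eventuallyEq_of_mem (hVo.mem_nhds hxV) fun z hz => ?_)
    by_cases hzU : ∃ j, z ∈ U j
    · obtain ⟨j, hj⟩ := hzU
      rw [glue_eq_of_mem hU hj, hV ⟨z, hz, hj⟩ hi]
    · rw [glue_eq_of_forall_notMem (not_exists.mp hzU), hg₀ i z (not_exists.mp hzU i)]
  · refine (continuousAt_const : ContinuousAt (fun _ => y₀) x).congr
      (eventuallyEq_of_mem (hVo.mem_nhds hxV) fun z hz => ?_)
    exact (glue_eq_of_forall_notMem fun j hj => hi ⟨j, z, hz, hj⟩).symm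

end DiscreteFamily

section IdealOpenTopology

variable {X Y : Type*} [TopologicalSpace X] [TopologicalSpace Y] {I : Set (Set X)}

theorem IsCompactIdeal.singleton_mem (hI : IsCompactIdeal X I) (x : X) : {x} ∈ I := by
  obtain ⟨A, hA, hxA⟩ := mem_sUnion.mp (hI.sUnion_eq ▸ mem_univ x)
  simpa [inter_eq_self_of_subset_right (singleton_subset_iff.mpr hxA)] using
    hI.inter_compact_mem A hA {x} isCompact_singleton

theorem continuous_apply_idealFn {x : X} (hx : {x} ∈ I) :
    Continuous fun f : IdealFn X Y I => f x := by
  refine continuous_def.mpr fun V hV => ?_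
  have : (fun f : IdealFn X Y I => f x) ⁻¹' V = {f : X → Y | MapsTo f {x} V} := by
    ext f
    exact mapsTo_singleton.symm
  rw [this]
  exact isOpen_generateFrom_of_mem ⟨{x}, hx, V, hV, rfl⟩

/-- Since a compact set meets only finitely many `U i`, each subbasic set `[K; V]` pulls back to
a union of cylinders. -/
theorem continuous_glue_idealFn {ι α : Type*} [TopologicalSpace α] [DiscreteTopology α]
    {U : ι → Set X} (hU : IsDiscreteFamily U) (hI : ∀ K ∈ I, IsCompact K) (b : ι → α → X → Y)
    (y₀ : Y) : Continuous (Y := IdealFn X Y I) fun s : ι → α => glue U (fun i => b i (s i)) y₀ := by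
  refine continuous_generateFrom_iff.mpr ?_
  rintro _ ⟨K, hK, V, -, rfl⟩
  refine isOpen_of_forall_exists_finset_eqOn_mem fun s hs => ?_
  have hfin := hU.locallyFinite.finite_nonempty_inter_compact (hI K hK)
  refine ⟨hfin.toFinset, fun t ht => MapsTo.congr hs (eqOn_glue fun i hi => ?_)⟩
  rw [ht (hfin.mem_toFinset.mpr hi)]

end IdealOpenTopology

theorem YTychonoff.exists_continuous_eq_of_notMem {X Y : Type*} [TopologicalSpace X]
    [TopologicalSpace Y] (hXY : YTychonoff X Y) {U : Set X} (hU : IsOpen U) {x : X} (hx : x ∈ U)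
    (y y₀ : Y) : ∃ g : X → Y, Continuous g ∧ g x = y ∧ ∀ z ∉ U, g z = y₀ := by
  obtain ⟨g, hg, hgx, hgU⟩ := hXY Uᶜ hU.isClosed_compl y₀ {x} (finite_singleton x)
    (by simpa using hx) fun _ => y
  exact ⟨g, hg, hgx ⟨x, rfl⟩, fun z hz => hgU ⟨z, hz, rfl⟩⟩

theorem not_normal_of_discrete_family_general {X : Type u} {Y : Type v} {ι : Type w}
    [TopologicalSpace X] [TopologicalSpace Y] [T1Space Y]
    (hYpc : ∃ f : Y → ℝ, Continuous f ∧ ¬ Bornology.IsBounded (Set.range f))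
    (hXT : YTychonoff X Y)
    (hι : Cardinal.mk ι = Cardinal.aleph 1)
    (U : ι → Set X) (hUo : ∀ i, IsOpen (U i)) (hUne : ∀ i, (U i).Nonempty)
    (hUd : ∀ x : X, ∃ V : Set X, IsOpen V ∧ x ∈ V ∧
      {i : ι | (V ∩ U i).Nonempty}.Subsingleton)
    (I : Set (Set X)) (hI : IsCompactIdeal X I)
    (H : Set (IdealFn X Y I))
    (hH : {f : IdealFn X Y I | Continuous (f : X → Y)} ⊆ H) :
    ¬ (T1Space ↥H ∧ NormalSpace ↥H) := by
  rintro ⟨-, hN⟩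
  have hU : IsDiscreteFamily U := hUd
  have hιc : ¬ Countable ι := fun h =>
    (Cardinal.mk_le_aleph0_iff.mpr h).not_gt (hι ▸ Cardinal.aleph0_lt_aleph_one)
  obtain ⟨f, hf, hfb⟩ := hYpc
  obtain ⟨y, hy⟩ := exists_isClosedEmbedding_nat_of_not_isBounded hf hfb
  choose x hx using hUne
  choose b hb hbx hbU using fun i n =>
    hXT.exists_continuous_eq_of_notMem (hUo i) (hx i) (y n) (y 0)
  let φ : (ι → ℕ) → H := fun s =>
    ⟨glue U (fun i => b i (s i)) (y 0), hH (continuous_glue hU (fun i => hb i _) fun i => hbU i _)⟩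
  let r : H → ι → Y := fun h i => h.1 (x i)
  have hφ : Continuous φ := (continuous_glue_idealFn hU hI.isCompact b (y 0)).subtype_mk _
  have hr : Continuous r := continuous_pi fun i =>
    (continuous_apply_idealFn (hI.singleton_mem (x i))).comp continuous_subtype_val
  have hrφ : r ∘ φ = Pi.map fun _ => y :=
    funext fun s => funext fun i => show glue U (fun j => b j (s j)) (y 0) (x i) = y (s i) from
      (glue_eq_of_mem hU (hx i)).trans (hbx i (s i))
  exact not_normalSpace_of_isClosedEmbedding_comp hιc hφ hr (hrφ ▸ .piMap fun _ => hy) hN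

/-- If `Y` is Tychonoff and not pseudocompact, `X` is `Y`-Tychonoff and
contains a discrete family of nonempty open sets indexed by a set of cardinality `ℵ₁`,
and `I` is an ideal of compact sets in `X`, then no subspace `H` of `(Y^X, τ_I)`
containing `C(X,Y)` is normal. -/
theorem not_normal_of_discrete_family {X : Type u} {Y : Type v} {ι : Type w}
    [TopologicalSpace X] [TopologicalSpace Y] [T1Space Y] [CompletelyRegularSpace Y]
    (hYpc : ∃ f : Y → ℝ, Continuous f ∧ ¬ Bornology.IsBounded (Set.range f))
    (hXT : YTychonoff X Y)
    (hι : Cardinal.mk ι = Cardinal.aleph 1)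
    (U : ι → Set X) (hUo : ∀ i, IsOpen (U i)) (hUne : ∀ i, (U i).Nonempty)
    (hUd : ∀ x : X, ∃ V : Set X, IsOpen V ∧ x ∈ V ∧
      {i : ι | (V ∩ U i).Nonempty}.Subsingleton)
    (I : Set (Set X)) (hI : IsCompactIdeal X I)
    (H : Set (IdealFn X Y I))
    (hH : {f : IdealFn X Y I | Continuous (f : X → Y)} ⊆ H) :
    ¬ (T1Space ↥H ∧ NormalSpace ↥H) :=
  not_normal_of_discrete_family_general hYpc hXT hι U hUo hUne hUd I hI H hH
end

section
/- Let Z be a Tychonoff P-space. If the pseudocharacter of Z is uncountable, i.e., there is a point z ∈ Z such that no countable family of open sets has intersection equal to {z}, then the cellularity of Z is uncountable, i.e., there exists an uncountable pairwise disjoint family of nonempty open subsets of Z. -/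
/-!
Fix `z` of uncountable pseudocharacter and take, by Zorn, a maximal pairwise disjoint family `𝒱`
of nonempty open sets whose closures miss `z`. If `𝒱` were countable, the complements of the
closures of its members would meet, the space being a P-space, in an open neighbourhood `G` of
`z` with `G ≠ {z}`. Separating `z` from another point of `G` by disjoint open sets (a Tychonoff
space is Hausdorff) gives a new member of the family, disjoint from all of `𝒱`.
-/

open Set Filter Topology TopologicalSpace

universe u v

def IsPSpace (X : Type*) [TopologicalSpace X] : Prop :=
  ∀ S : Set (Set X), S.Countable → (∀ U ∈ S, IsOpen U) → IsOpen (⋂₀ S)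

theorem exists_maximal_pairwiseDisjoint_subset {ι α : Type*} [PartialOrder α] [OrderBot α]
    (s : Set ι) (f : ι → α) : ∃ t, Maximal (fun t => t ⊆ s ∧ t.PairwiseDisjoint f) t :=
  zorn_subset _ fun c hcs hc =>
    ⟨⋃₀ c, ⟨sUnion_subset fun _ ht => (hcs ht).1,
      (hc.pairwiseDisjoint_sUnion f).2 fun _ ht => (hcs ht).2⟩,
      fun _ => subset_sUnion_of_mem⟩

section Hausdorff

variable {X : Type*} [TopologicalSpace X] [T2Space X]

theorem exists_isOpen_nonempty_subset_notMem_closure {G : Set X} (hG : IsOpen G) {y z : X}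
    (hy : y ∈ G) (hyz : y ≠ z) :
    ∃ V, IsOpen V ∧ V.Nonempty ∧ V ⊆ G ∧ z ∉ closure V := by
  obtain ⟨W, U, hW, hU, hyW, hzU, hWU⟩ := t2_separation hyz
  refine ⟨G ∩ W, hG.inter hW, ⟨y, hy, hyW⟩, inter_subset_left, fun hz => ?_⟩
  exact (hWU.symm.mono_right inter_subset_right).closure_right hU |>.notMem_of_mem_left hzU hz

theorem IsPSpace.exists_isOpen_nonempty_disjoint_of_countable (hP : IsPSpace X) {z : X}
    (hz : ∀ S : Set (Set X), S.Countable → (∀ U ∈ S, IsOpen U) → ⋂₀ S ≠ {z})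
    {𝒱 : Set (Set X)} (h𝒱c : 𝒱.Countable) (h𝒱 : ∀ V ∈ 𝒱, z ∉ closure V) :
    ∃ W, IsOpen W ∧ W.Nonempty ∧ z ∉ closure W ∧ ∀ V ∈ 𝒱, Disjoint W V := by
  set S := (fun V => (closure V)ᶜ) '' 𝒱
  have hSc : S.Countable := h𝒱c.image _
  have hSo : ∀ U ∈ S, IsOpen U := by
    rintro _ ⟨V, -, rfl⟩
    exact isClosed_closure.isOpen_compl
  have hzS : z ∈ ⋂₀ S := by
    rintro _ ⟨V, hV, rfl⟩
    exact h𝒱 V hV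
  obtain ⟨y, hyS, hyz⟩ : ∃ y ∈ ⋂₀ S, y ≠ z := by
    by_contra! h
    exact hz S hSc hSo (eq_singleton_iff_unique_mem.2 ⟨hzS, h⟩)
  obtain ⟨W, hW, hWne, hWS, hzW⟩ :=
    exists_isOpen_nonempty_subset_notMem_closure (hP S hSc hSo) hyS hyz
  refine ⟨W, hW, hWne, hzW, fun V hV => ?_⟩
  have hWV : W ⊆ (closure V)ᶜ := fun x hx => hWS hx _ ⟨V, hV, rfl⟩
  exact disjoint_compl_left.mono hWV subset_closure

end Hausdorff

/-- A Tychonoff P-space with uncountable pseudocharacter has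
uncountable cellularity. -/
theorem uncountable_cellularity_of_P_space {Z : Type u} [TopologicalSpace Z]
    [T1Space Z] [CompletelyRegularSpace Z]
    (hP : ∀ S : Set (Set Z), S.Countable → (∀ U ∈ S, IsOpen U) → IsOpen (⋂₀ S))
    (hpsi : ∃ z : Z, ∀ S : Set (Set Z), S.Countable → (∀ U ∈ S, IsOpen U) →
      ⋂₀ S ≠ {z}) :
    ∃ 𝒰 : Set (Set Z), (∀ U ∈ 𝒰, IsOpen U ∧ U.Nonempty) ∧
      𝒰.PairwiseDisjoint id ∧ ¬ 𝒰.Countable := by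
  obtain ⟨z, hz⟩ := hpsi
  obtain ⟨𝒱, h𝒱max⟩ := exists_maximal_pairwiseDisjoint_subset
    {V : Set Z | IsOpen V ∧ V.Nonempty ∧ z ∉ closure V} id
  obtain ⟨h𝒱S, h𝒱disj⟩ := h𝒱max.prop
  refine ⟨𝒱, fun V hV => ⟨(h𝒱S hV).1, (h𝒱S hV).2.1⟩, h𝒱disj, fun h𝒱c => ?_⟩
  have : T35Space Z := ⟨⟩
  obtain ⟨W, hW, hWne, hzW, hW𝒱⟩ :=
    IsPSpace.exists_isOpen_nonempty_disjoint_of_countable hP hz h𝒱c fun V hV => (h𝒱S hV).2.2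
  have hW𝒱mem : W ∈ 𝒱 := h𝒱max.mem_of_prop_insert
    ⟨insert_subset ⟨hW, hWne, hzW⟩ h𝒱S, h𝒱disj.insert fun V hV _ => hW𝒱 V hV⟩
  exact hWne.ne_empty (disjoint_self.1 (hW𝒱 W hW𝒱mem))
end

section
/- Let X be a Tychonoff space and let X_{ℵ₀} denote X equipped with the Baire topology. Then X_{ℵ₀} has countable cellularity (every pairwise disjoint family of nonempty open subsets of X_{ℵ₀} is countable) if and only if X is countable. -/
/-!
Zero-sets are closed under countable intersections (they are preimages of `0` in the
perfectly normal space `ℝ^ℕ`). Fix `x` and a maximal disjoint family `𝒰` of nonempty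
zero-sets missing `x`; under countable cellularity `𝒰` is countable, so intersecting, over
`U ∈ 𝒰`, zero-sets that contain `x` and miss `U` gives a zero-set `Z ∋ x` missing every
member of `𝒰`. Any `y ≠ x` in `Z` would yield a nonempty zero-set `Z ∩ Z'` with `x ∉ Z'`
that could be added to `𝒰`, so `Z = {x}`. Thus all singletons are open in `X_{ℵ₀}`, and
being pairwise disjoint they are countably many.
-/

open Set Filter Topology TopologicalSpace

universe u v

theorem Set.PairwiseDisjoint.countable_of_nonempty {α : Type*} [Countable α]
    {𝒰 : Set (Set α)} (hd : 𝒰.PairwiseDisjoint id) (hne : ∀ U ∈ 𝒰, U.Nonempty) :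
    𝒰.Countable := by
  choose p hp using fun U : 𝒰 => hne U U.2
  have hp_inj : Function.Injective p := fun U V hUV =>
    Subtype.ext (hd.elim_set U.2 V.2 _ (hp U) (hUV ▸ hp V))
  exact Set.countable_coe_iff.mp hp_inj.countable

theorem exists_maximal_pairwiseDisjoint {α : Type*} (P : Set α → Prop) :
    ∃ 𝒰 : Set (Set α), (∀ U ∈ 𝒰, P U) ∧ 𝒰.PairwiseDisjoint id ∧
      ∀ V, P V → (∀ U ∈ 𝒰, Disjoint U V) → V ∈ 𝒰 := by
  obtain ⟨𝒰, ⟨hP, hd⟩, hmax⟩ := zorn_subset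
    {𝒰 : Set (Set α) | (∀ U ∈ 𝒰, P U) ∧ 𝒰.PairwiseDisjoint id} fun c hc hchain =>
      ⟨⋃₀ c, ⟨fun U ⟨𝒱, h𝒱, hU⟩ => (hc h𝒱).1 U hU,
        (hchain.pairwiseDisjoint_sUnion id).2 fun 𝒱 h𝒱 => (hc h𝒱).2⟩,
        fun _ => subset_sUnion_of_mem⟩
  refine ⟨𝒰, hP, hd, fun V hV hVd => ?_⟩
  have hins : (∀ U ∈ insert V 𝒰, P U) ∧ (insert V 𝒰).PairwiseDisjoint id :=
    ⟨forall_mem_insert.2 ⟨hV, hP⟩, hd.insert fun U hU _ => (hVd U hU).symm⟩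
  exact hmax hins (subset_insert V 𝒰) (mem_insert V 𝒰)

section ZeroSet

variable {X : Type u} [TopologicalSpace X]

theorem IsZeroSet.isClosed {F : Set X} (hF : IsZeroSet F) : IsClosed F := by
  obtain ⟨f, hf, rfl⟩ := hF
  exact isClosed_singleton.preimage hf

theorem IsZeroSet.preimage {Y : Type v} [TopologicalSpace Y] {F : Set Y} (hF : IsZeroSet F)
    {g : X → Y} (hg : Continuous g) : IsZeroSet (g ⁻¹' F) := by
  obtain ⟨f, hf, rfl⟩ := hF
  exact ⟨f ∘ g, hf.comp hg, rfl⟩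

theorem IsClosed.isZeroSet [PerfectlyNormalSpace X] {F : Set X} (hF : IsClosed F) :
    IsZeroSet F := by
  obtain ⟨f, hfF, -⟩ := perfectlyNormalSpace_iff_forall_isClosed_preimage_zero.1 ‹_› F hF
  exact ⟨f, f.continuous, hfF⟩

theorem isZeroSet_iInter {ι : Type v} [Countable ι] {F : ι → Set X}
    (hF : ∀ i, IsZeroSet (F i)) : IsZeroSet (⋂ i, F i) := by
  choose f hf hFf using hF
  have h : ⋂ i, F i = (fun x i => f i x) ⁻¹' {0} := by
    ext x
    simp [hFf, funext_iff]
  rw [h]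
  exact isClosed_singleton.isZeroSet.preimage (continuous_pi hf)

theorem IsZeroSet.inter {F G : Set X} (hF : IsZeroSet F) (hG : IsZeroSet G) :
    IsZeroSet (F ∩ G) := by
  rw [inter_eq_iInter]
  exact isZeroSet_iInter (Bool.forall_bool.2 ⟨hG, hF⟩)

theorem IsZeroSet.isOpen_baireTopology {F : Set X} (hF : IsZeroSet F) :
    IsOpen[baireTopology X] F :=
  isOpen_generateFrom_of_mem hF

theorem exists_isZeroSet_mem_disjoint [CompletelyRegularSpace X] {C : Set X} (hC : IsClosed C)
    {x : X} (hx : x ∉ C) : ∃ Z, IsZeroSet Z ∧ x ∈ Z ∧ Disjoint Z C := by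
  obtain ⟨f, hf, hfx, hfC⟩ := CompletelyRegularSpace.completely_regular x C hC hx
  refine ⟨(fun y => (f y : ℝ)) ⁻¹' {0}, ⟨_, continuous_subtype_val.comp hf, rfl⟩, ?_, ?_⟩
  · simp [hfx]
  · refine disjoint_left.2 fun y hy hyC => ?_
    simp [hfC hyC] at hy

theorem isZeroSet_singleton_of_pairwiseDisjoint_countable [T1Space X] [CompletelyRegularSpace X]
    (H : ∀ 𝒰 : Set (Set X), (∀ U ∈ 𝒰, IsZeroSet U ∧ U.Nonempty) → 𝒰.PairwiseDisjoint id →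
      𝒰.Countable) (x : X) : IsZeroSet {x} := by
  obtain ⟨𝒰, h𝒰, hd, hmax⟩ :=
    exists_maximal_pairwiseDisjoint fun U : Set X => IsZeroSet U ∧ U.Nonempty ∧ x ∉ U
  have : Countable 𝒰 := (H 𝒰 (fun U hU => ⟨(h𝒰 U hU).1, (h𝒰 U hU).2.1⟩) hd).to_subtype
  choose W hW hxW hWU using fun U : 𝒰 =>
    exists_isZeroSet_mem_disjoint (h𝒰 U U.2).1.isClosed (h𝒰 U U.2).2.2
  have hZ : IsZeroSet (⋂ U, W U) := isZeroSet_iInter hW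
  suffices ⋂ U, W U = {x} from this ▸ hZ
  refine eq_singleton_iff_unique_mem.2 ⟨mem_iInter.2 hxW, fun y hy => ?_⟩
  by_contra hyx
  obtain ⟨Z', hZ', hyZ', hZ'x⟩ := exists_isZeroSet_mem_disjoint isClosed_singleton hyx
  have hV : (⋂ U, W U) ∩ Z' ∈ 𝒰 := by
    refine hmax _ ⟨hZ.inter hZ', ⟨y, hy, hyZ'⟩, fun hx => disjoint_singleton_right.1 hZ'x hx.2⟩
      fun U hU => ?_
    exact (hWU ⟨U, hU⟩).symm.mono_right (inter_subset_left.trans (iInter_subset _ _))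
  exact disjoint_left.1 (hWU ⟨_, hV⟩) (mem_iInter.1 hy ⟨_, hV⟩) ⟨hy, hyZ'⟩

end ZeroSet

/-- For a Tychonoff space `X`, the space `X_{ℵ₀}` (i.e. `X` with the
Baire topology) has countable cellularity iff `X` is countable. -/
theorem baire_countable_cellularity_iff_countable {X : Type u} [TopologicalSpace X]
    [T1Space X] [CompletelyRegularSpace X] :
    (∀ 𝒰 : Set (Set X), (∀ U ∈ 𝒰, @IsOpen X (baireTopology X) U ∧ U.Nonempty) →
      𝒰.PairwiseDisjoint id → 𝒰.Countable) ↔ Countable X := by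
  constructor
  · intro H
    have hsingleton : ∀ x : X, IsZeroSet {x} :=
      isZeroSet_singleton_of_pairwiseDisjoint_countable fun 𝒰 h𝒰 =>
        H 𝒰 fun U hU => ⟨(h𝒰 U hU).1.isOpen_baireTopology, (h𝒰 U hU).2⟩
    have hrange : (range (singleton : X → Set X)).Countable :=
      H _ (forall_mem_range.2 fun x => ⟨(hsingleton x).isOpen_baireTopology, singleton_nonempty x⟩)
        pairwiseDisjoint_range_singleton
    simpa [countable_univ_iff] using hrange.preimage singleton_injective
  · exact fun _ 𝒰 h𝒰 hd => hd.countable_of_nonempty fun U hU => (h𝒰 U hU).2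
end

section
/- Let Y be a Tychonoff space containing an infinite closed and discrete subspace D = {y_n}_{n∈ω} (with the y_n pairwise distinct), let X be an uncountable Y-z-Tychonoff metrizable compact space, and let H be a subspace of Y^X (with the topology of pointwise convergence) containing B_1^{st}(X,Y). Then H contains a subspace 𝓕 ⊆ B_1^{st}(X,Y) of cardinality 2^{ℵ₀} that is closed and discrete in H (in fact, closed and discrete in Y^X) and such that f(X) ⊆ D for every f ∈ 𝓕. -/
open Set Filter Topology TopologicalSpace

universe u v

/-!
Embed the Cantor space into `X` by a continuous injection `φ`. For a point `t` of the Cantor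
space, let `f_t` be `y 0` off the range of `φ` and at `φ t`, and `y (k + 1)` at `φ a` when `a`
first differs from `t` at index `k`. The level sets `f_t⁻¹(y (k + 1))` are closed, hence zero
sets, and `f_t⁻¹(y 0)` is an increasing union of closed sets, so `Y`-z-Tychonoffness yields
continuous functions stably converging to `f_t`. A pointwise limit `g` of such functions takes
values in the closed discrete set `range y`, so the closed sets `{t | f_t x = g x}` of the
Cantor space have the finite intersection property; by compactness some `t` lies in all of
them, and `g = f_t`. Finally `f_t` is the only member of the family taking the value `y 0`
at `φ t`, which makes the family discrete.
-/

open PiNat Function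

section FirstDiffCode

variable {E : ℕ → Type*}

open Classical in
noncomputable def firstDiffCode (a t : ∀ n, E n) : ℕ :=
  if a = t then 0 else firstDiff a t + 1

theorem firstDiffCode_eq_zero_iff {a t : ∀ n, E n} : firstDiffCode a t = 0 ↔ a = t := by
  unfold firstDiffCode
  split_ifs with h <;> simp [h]

theorem firstDiffCode_comm (a t : ∀ n, E n) : firstDiffCode a t = firstDiffCode t a := by
  unfold firstDiffCode
  by_cases h : a = t
  · simp [h]
  · simp [h, Ne.symm h, firstDiff_comm a t]

theorem setOf_firstDiffCode_eq_succ (a : ∀ n, E n) (n : ℕ) :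
    {t | firstDiffCode a t = n + 1} = cylinder a n \ cylinder a (n + 1) := by
  ext t
  by_cases h : t = a
  · subst h
    simp [firstDiffCode]
  · have hcode : firstDiffCode a t = firstDiff t a + 1 := by
      simp [firstDiffCode, Ne.symm h, firstDiff_comm a t]
    simp only [Set.mem_ofPred_eq, Set.mem_sdiff, hcode, mem_cylinder_iff_le_firstDiff h]
    omega

variable [∀ n, TopologicalSpace (E n)] [∀ n, DiscreteTopology (E n)]

theorem isClosed_cylinder (a : ∀ n, E n) (n : ℕ) : IsClosed (cylinder a n) := by
  rw [cylinder_eq_pi]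
  exact isClosed_set_pi fun _ _ => isClosed_discrete _

theorem isClosed_setOf_firstDiffCode_eq (a : ∀ n, E n) :
    ∀ n, IsClosed {t | firstDiffCode a t = n}
  | 0 => by
    simpa only [firstDiffCode_eq_zero_iff, ofPred_eq_eq_singleton'] using isClosed_singleton
  | n + 1 => by
    rw [setOf_firstDiffCode_eq_succ]
    exact (isClosed_cylinder a n).sdiff (isOpen_cylinder E a (n + 1))

end FirstDiffCode

theorem isClosedEmbedding_of_isDiscrete_range {α β : Type*} [TopologicalSpace α]
    [DiscreteTopology α] [TopologicalSpace β] {f : α → β} (hf : Injective f)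
    (hclosed : IsClosed (range f)) (hdisc : IsDiscrete (range f)) : IsClosedEmbedding f := by
  refine .of_continuous_injective_isClosedMap continuous_of_discreteTopology hf fun s _ => ?_
  have := hdisc.to_subtype
  have h := (isClosed_discrete (Subtype.val ⁻¹' (f '' s) : Set (range f))).trans hclosed
  rwa [Subtype.image_preimage_coe, inter_eq_right.mpr (image_subset_range f s)] at h

section RangeInPi

variable {K X : Type*}

theorem isClosed_range_of_isClosed_setOf_apply_eq [TopologicalSpace K] [CompactSpace K]
    {c : K → X → ℕ} (hc : ∀ x n, IsClosed {t | c t x = n}) : IsClosed (range c) := by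
  refine isClosed_of_closure_subset fun g hg => ?_
  have hfip : ∀ E : Finset X, (univ ∩ ⋂ x ∈ E, {t | c t x = g x}).Nonempty := by
    intro E
    obtain ⟨_, hmem, t, rfl⟩ := mem_closure_iff.mp hg _
      (isOpen_set_pi E.finite_toSet fun x _ => isOpen_discrete {g x}) fun x _ => rfl
    exact ⟨t, mem_univ t, mem_iInter₂.mpr hmem⟩
  obtain ⟨t, -, ht⟩ := isCompact_univ.inter_iInter_nonempty _ (fun x => hc x (g x)) hfip
  exact ⟨t, funext fun x => mem_iInter.mp ht x⟩

theorem isDiscrete_range_of_apply_eq_imp_eq {c : K → X → ℕ} (p : K → X)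
    (hp : ∀ s t, c s (p t) = c t (p t) → s = t) : IsDiscrete (range c) := by
  refine isDiscrete_iff_forall_mem_exists_isOpen.mpr ?_
  rintro _ ⟨t, rfl⟩
  refine ⟨(fun h => h (p t)) ⁻¹' {c t (p t)},
    (isOpen_discrete _).preimage (continuous_apply (p t)), ?_⟩
  ext h
  constructor
  · rintro ⟨hh, s, rfl⟩
    rw [hp s t hh, mem_singleton_iff]
  · rintro rfl
    exact ⟨rfl, t, rfl⟩

end RangeInPi

theorem comp_mem_baireOneStable {X Y : Type*} [TopologicalSpace X] [TopologicalSpace Y]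
    (hXY : YzTychonoff X Y) (y : ℕ → Y) {g : X → ℕ} {A : ℕ → Set X}
    (hA : ∀ m, IsClosed (A m)) (hAmono : Monotone A) (hAg : ⋃ m, A m = g ⁻¹' {0})
    (hg : ∀ n, IsZeroSet (g ⁻¹' {n + 1})) : y ∘ g ∈ BaireOneStable X Y := by
  have hf : ∀ m, ∃ f : X → Y, Continuous f ∧ f '' A m ⊆ {y 0} ∧
      ∀ i : Fin m, f '' (g ⁻¹' {(i : ℕ) + 1}) ⊆ {y ((i : ℕ) + 1)} := by
    refine fun m => hXY.2 (A m) (hA m) m _ (fun i => hg i) (fun i j hij => ?_) ?_ _ _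
    · exact (disjoint_singleton.mpr (by omega)).preimage g
    · simp only [iUnion_subset_iff]
      intro i x hx hxA
      have : x ∈ g ⁻¹' {0} := hAg ▸ mem_iUnion_of_mem m hxA
      simp_all
  choose f hfc hfA hfg using hf
  refine ⟨f, hfc, fun x => ?_⟩
  obtain ⟨N, hN⟩ : ∃ N, ∀ m ≥ N, f m x = y (g x) := by
    rcases hgx : g x with _ | i
    · obtain ⟨N, hN⟩ := mem_iUnion.mp (hAg ▸ hgx : x ∈ ⋃ m, A m)
      exact ⟨N, fun m hm => hfA m ⟨x, hAmono hm hN, rfl⟩⟩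
    · exact ⟨i + 1, fun m hm => hfg m ⟨i, hm⟩ ⟨x, hgx, rfl⟩⟩
  exact (finite_lt_nat N).subset fun m hm => not_le.mp fun h => hm (hN m h)

theorem IsClosed.isZeroSet_s16 {X : Type*} [PseudoMetricSpace X] {S : Set X} (hS : IsClosed S) :
    IsZeroSet S := by
  rcases S.eq_empty_or_nonempty with rfl | hne
  · exact ⟨fun _ => 1, continuous_const, by simp⟩
  · exact ⟨(Metric.infDist · S), Metric.continuous_infDist_pt S,
      Set.ext fun x => hS.mem_iff_infDist_zero hne⟩

section CantorCode

variable {E : ℕ → Type*} {X : Type*}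

noncomputable def cantorCode (φ : (∀ n, E n) → X) (t : ∀ n, E n) : X → ℕ :=
  extend φ (firstDiffCode t) 0

variable {φ : (∀ n, E n) → X}

theorem cantorCode_apply (hφ : Injective φ) (t a : ∀ n, E n) :
    cantorCode φ t (φ a) = firstDiffCode t a :=
  hφ.extend_apply _ _ a

theorem cantorCode_of_notMem_range {x : X} (hx : x ∉ range φ) (t : ∀ n, E n) :
    cantorCode φ t x = 0 :=
  extend_apply' _ _ x hx

theorem cantorCode_preimage_zero (hφ : Injective φ) (t : ∀ n, E n) :
    cantorCode φ t ⁻¹' {0} = (range φ)ᶜ ∪ {φ t} := by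
  ext x
  by_cases hx : x ∈ range φ
  · obtain ⟨a, rfl⟩ := hx
    simp [cantorCode_apply hφ, firstDiffCode_eq_zero_iff, hφ.eq_iff, eq_comm]
  · simp [cantorCode_of_notMem_range hx, hx]

theorem cantorCode_preimage_succ (hφ : Injective φ) (t : ∀ n, E n) (n : ℕ) :
    cantorCode φ t ⁻¹' {n + 1} = φ '' {a | firstDiffCode t a = n + 1} := by
  ext x
  by_cases hx : x ∈ range φ
  · obtain ⟨a, rfl⟩ := hx
    simp [cantorCode_apply hφ, hφ.eq_iff]
  · simp only [mem_preimage, cantorCode_of_notMem_range hx, mem_singleton_iff]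
    exact ⟨fun h => absurd h (by omega), fun ⟨a, _, ha⟩ => absurd ⟨a, ha⟩ hx⟩

variable [∀ n, TopologicalSpace (E n)] [∀ n, DiscreteTopology (E n)]

theorem isClosed_setOf_cantorCode_apply_eq (hφ : Injective φ) (x : X) (n : ℕ) :
    IsClosed {t | cantorCode φ t x = n} := by
  by_cases hx : x ∈ range φ
  · obtain ⟨a, rfl⟩ := hx
    simp_rw [cantorCode_apply hφ, firstDiffCode_comm _ a]
    exact isClosed_setOf_firstDiffCode_eq a n
  · simp_rw [cantorCode_of_notMem_range hx]
    exact isClosed_const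

theorem comp_cantorCode_mem_baireOneStable [CompactSpace (∀ n, E n)] [MetricSpace X]
    {Y : Type*} [TopologicalSpace Y] (hXY : YzTychonoff X Y) (y : ℕ → Y) (hφc : Continuous φ)
    (hφ : Injective φ) (t : ∀ n, E n) : y ∘ cantorCode φ t ∈ BaireOneStable X Y := by
  obtain ⟨F, hF, -, hFU, hFmono⟩ :=
    hφc.isClosedMap.isClosed_range.isOpen_compl.exists_iUnion_isClosed
  refine comp_mem_baireOneStable hXY y (A := fun m => F m ∪ {φ t})
    (fun m => (hF m).union isClosed_singleton)
    (fun m n h => union_subset_union_left _ (hFmono h))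
    ?_ fun n => ?_
  · rw [← iUnion_union, hFU, cantorCode_preimage_zero hφ]
  · rw [cantorCode_preimage_succ hφ]
    exact (hφc.isClosedMap _ (isClosed_setOf_firstDiffCode_eq t _)).isZeroSet_s16

end CantorCode

theorem exists_closed_discrete_continuum_general {X : Type u} {Y : Type v}
    [TopologicalSpace X] [TopologicalSpace Y]
    (y : ℕ → Y) (hyinj : Function.Injective y)
    (hyclosed : IsClosed (Set.range y))
    (hydisc : ∀ n : ℕ, ∃ U : Set Y, IsOpen U ∧ U ∩ Set.range y = {y n})
    [Uncountable X] [TopologicalSpace.MetrizableSpace X] [CompactSpace X]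
    (hXT : YzTychonoff X Y)
    (H : Set (X → Y)) (hH : BaireOneStable X Y ⊆ H) :
    ∃ F : Set (X → Y), F ⊆ BaireOneStable X Y ∧ F ⊆ H ∧
      Cardinal.mk ↥F = Cardinal.continuum ∧
      IsClosed F ∧ DiscreteTopology ↥F ∧
      IsClosed (Subtype.val ⁻¹' F : Set ↥H) ∧
      ∀ f ∈ F, Set.range f ⊆ Set.range y := by
  let := metrizableSpaceMetric X
  obtain ⟨φ, -, hφc, hφ⟩ :=
    (isClosed_univ (X := X)).exists_nat_bool_injection_of_not_countable
      (countable_univ_iff.not.mpr not_countable)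
  have hY : IsClosedEmbedding (Pi.map fun _ : X => y) :=
    .piMap fun _ => isClosedEmbedding_of_isDiscrete_range hyinj hyclosed
      (isDiscrete_iff_forall_mem_exists_isOpen.mpr (forall_mem_range.mpr hydisc))
  have hsep : ∀ s t, cantorCode φ s (φ t) = cantorCode φ t (φ t) → s = t := by
    intro s t h
    rwa [cantorCode_apply hφ, cantorCode_apply hφ, firstDiffCode_eq_zero_iff.mpr rfl,
      firstDiffCode_eq_zero_iff] at h
  have hinj : Injective (fun t => y ∘ cantorCode φ t) :=
    hY.injective.comp fun s t h => hsep s t (by rw [h])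
  have hrange :
      range (fun t => y ∘ cantorCode φ t) = Pi.map (fun _ => y) '' range (cantorCode φ) :=
    range_comp (Pi.map fun _ => y) (cantorCode φ)
  have hclosed : IsClosed (range fun t => y ∘ cantorCode φ t) := hrange ▸
    hY.isClosedMap _ (isClosed_range_of_isClosed_setOf_apply_eq
      (isClosed_setOf_cantorCode_apply_eq hφ))
  have hB1 : range (fun t => y ∘ cantorCode φ t) ⊆ BaireOneStable X Y := by
    rintro _ ⟨t, rfl⟩
    exact comp_cantorCode_mem_baireOneStable hXT y hφc hφ t
  refine ⟨range fun t => y ∘ cantorCode φ t, hB1, hB1.trans hH, ?_, hclosed, ?_,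
    hclosed.preimage continuous_subtype_val, ?_⟩
  · simpa [Cardinal.mk_arrow, ← Cardinal.two_power_aleph0] using
      Cardinal.mk_range_eq_of_injective hinj
  · rw [hrange, ← isDiscrete_iff_discreteTopology]
    exact (isDiscrete_range_of_apply_eq_imp_eq φ hsep).image hY.isInducing
  · rintro _ ⟨t, rfl⟩
    exact range_comp_subset_range _ _

/-- Let `Y` be Tychonoff with an infinite closed discrete subspace
`D = {y n}`, let `X` be an uncountable `Y`-z-Tychonoff metrizable compact space, and let
`H ⊆ Y^X` (pointwise topology) contain `B₁ˢᵗ(X,Y)`. Then `H` contains a subspace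
`𝓕 ⊆ B₁ˢᵗ(X,Y)` of cardinality `𝔠` that is closed and discrete in `H` (in fact in
`Y^X`) with `f(X) ⊆ D` for every `f ∈ 𝓕`. -/
theorem exists_closed_discrete_continuum {X : Type u} {Y : Type v}
    [TopologicalSpace X] [TopologicalSpace Y] [T1Space Y] [CompletelyRegularSpace Y]
    (y : ℕ → Y) (hyinj : Function.Injective y)
    (hyclosed : IsClosed (Set.range y))
    (hydisc : ∀ n : ℕ, ∃ U : Set Y, IsOpen U ∧ U ∩ Set.range y = {y n})
    [Uncountable X] [TopologicalSpace.MetrizableSpace X] [CompactSpace X]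
    (hXT : YzTychonoff X Y)
    (H : Set (X → Y)) (hH : BaireOneStable X Y ⊆ H) :
    ∃ F : Set (X → Y), F ⊆ BaireOneStable X Y ∧ F ⊆ H ∧
      Cardinal.mk ↥F = Cardinal.continuum ∧
      IsClosed F ∧ DiscreteTopology ↥F ∧
      IsClosed (Subtype.val ⁻¹' F : Set ↥H) ∧
      ∀ f ∈ F, Set.range f ⊆ Set.range y :=
  exists_closed_discrete_continuum_general y hyinj hyclosed hydisc hXT H hH
end
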